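/- arXiv:2304.01824 — 6 statements merged into one kernel-verified Lean document; each statement's English description precedes it below -/
import Mathlib

section
/- Let ν_1,…,ν_N ∈ ℂ be pairwise distinct. Then for each j = 1,…,N the vector B(ν_j) B(ν_j − 1) |⇑⟩ is the zero vector of H. -/
open scoped BigOperators
noncomputable section

namespace SixVertex

/-- A spin configuration of the `N`-site quantum chain: one spin (`0` = up, `1` = down)
at each site. Site `k` of the paper (k = 1,…,N) corresponds to index `k-1 : Fin N`. -/
abbrev Cfg (N : ℕ) := Fin N → Fin 2

/-- Operators on the quantum space `H = (ℂ²)^{⊗N}`, represented as matrices in the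
standard (spin-configuration) basis. -/
abbrev Op (N : ℕ) := Matrix (Cfg N) (Cfg N) ℂ

/-- The operator acting as the 2×2 matrix `M` in the `k`-th tensor factor and as the
identity elsewhere. -/
def siteOp {N : ℕ} (k : Fin N) (M : Matrix (Fin 2) (Fin 2) ℂ) : Op N :=
  Matrix.of fun s s' => if ∀ i, i ≠ k → s i = s' i then M (s k) (s' k) else 0

def piPlus : Matrix (Fin 2) (Fin 2) ℂ := !![1, 0; 0, 0]
def piMinus : Matrix (Fin 2) (Fin 2) ℂ := !![0, 0; 0, 1]
def sigmaPlus : Matrix (Fin 2) (Fin 2) ℂ := !![0, 1; 0, 0]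
def sigmaMinus : Matrix (Fin 2) (Fin 2) ℂ := !![0, 0; 1, 0]

/-- Rational weight `a(λ,ν) = λ - ν + 1`. -/
def aW (l v : ℂ) : ℂ := l - v + 1
/-- Rational weight `b(λ,ν) = λ - ν`. -/
def bW (l v : ℂ) : ℂ := l - v

/-- The L-operator at site `k` (a 2×2 matrix in the auxiliary space, with entries
operators on the quantum space); the weight `c` equals `1`. -/
def Lop {N : ℕ} (ν : Fin N → ℂ) (k : Fin N) (l : ℂ) :
    Matrix (Fin 2) (Fin 2) (Op N) :=
  !![aW l (ν k) • siteOp k piPlus + bW l (ν k) • siteOp k piMinus,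
       siteOp k sigmaMinus;
     siteOp k sigmaPlus,
       bW l (ν k) • siteOp k piPlus + aW l (ν k) • siteOp k piMinus]

/-- The monodromy matrix `T(λ) = L_N(λ,ν_N) ⋯ L_1(λ,ν_1)`. -/
def monodromy {N : ℕ} (ν : Fin N → ℂ) (l : ℂ) :
    Matrix (Fin 2) (Fin 2) (Op N) :=
  (((List.finRange N).reverse).map fun k => Lop ν k l).prod

/-- The operator `A(λ)`. -/
def Aop {N : ℕ} (ν : Fin N → ℂ) (l : ℂ) : Op N := monodromy ν l 0 0
/-- The operator `B(λ)`. -/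
def Bop {N : ℕ} (ν : Fin N → ℂ) (l : ℂ) : Op N := monodromy ν l 0 1
/-- The operator `C(λ)`. -/
def Cop {N : ℕ} (ν : Fin N → ℂ) (l : ℂ) : Op N := monodromy ν l 1 0
/-- The operator `D(λ)`. -/
def Dop {N : ℕ} (ν : Fin N → ℂ) (l : ℂ) : Op N := monodromy ν l 1 1

/-- The all-spins-up configuration. -/
def upCfg (N : ℕ) : Cfg N := fun _ => 0
/-- The all-spins-down configuration. -/
def downCfg (N : ℕ) : Cfg N := fun _ => 1

/-- The basis vector of `H` corresponding to a spin configuration `s`. -/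
def basisVec {N : ℕ} (s : Cfg N) : Cfg N → ℂ := Pi.single s 1

/-- The all-spins-up vacuum vector `|⇑⟩`. -/
def upVec (N : ℕ) : Cfg N → ℂ := basisVec (upCfg N)
/-- The all-spins-down vector `|⇓⟩`. -/
def downVec (N : ℕ) : Cfg N → ℂ := basisVec (downCfg N)

/-- The partition function of the six-vertex model with domain wall boundary conditions:
`Z_N(λ_1,…,λ_N) = ⟨⇓| B(λ_N) ⋯ B(λ_1) |⇑⟩`. -/
def Zfun (N : ℕ) (ν : Fin N → ℂ) (lam : Fin N → ℂ) : ℂ :=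
  (((List.finRange N).reverse).map fun j => Bop ν (lam j)).prod (downCfg N) (upCfg N)

end SixVertex
end

/-!
Build the monodromy one site at a time, `T_{k+1}(λ) = L_k(λ) T_k(λ)`, and follow
`W_k = B_k(μ) B_k(μ-1)|⇑⟩` together with `V_k = Λ_k(μ-1) B_k(μ)|⇑⟩ + D_k(μ) B_k(μ-1)|⇑⟩`, where
`Λ_k(λ) = ∏_{i<k} b(λ, ν_i)` is the eigenvalue of `D_k(λ)` on `|⇑⟩`. Site `k` still carries spin up
in all these vectors and `L_k` acts on that site alone, so with `b = μ - ν_k`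
`W_{k+1} = b (b + 1) W_k + b σ⁻_k V_k` and `V_{k+1} = b² V_k + 2 b Λ_k(μ) Λ_k(μ-1) σ⁻_k|⇑⟩`;
these close up because `a(μ - 1, ν) = b(μ, ν)`. For `μ = ν_j` the factor `b` vanishes at the site
`k = j`, and beyond it `Λ_k(ν_j) = 0`, so `W_k = V_k = 0` for all `k > j`, in particular `k = N`.
-/

namespace SixVertex

open Matrix

variable {N : ℕ}

lemma siteOp_mul_apply (k : Fin N) (A : Matrix (Fin 2) (Fin 2) ℂ) (X : Op N) (s s' : Cfg N) :
    (siteOp k A * X) s s' = ∑ c, A (s k) c * X (Function.update s k c) s' := by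
  have hoff (t : Cfg N) (ht : t ∉ Finset.univ.image (Function.update s k)) :
      siteOp k A s t * X t s' = 0 := by
    have : ¬ ∀ i, i ≠ k → s i = t i := fun h =>
      ht (Finset.mem_image.2 ⟨t k, Finset.mem_univ _, by
        ext i; by_cases hi : i = k <;> simp_all [Function.update_of_ne]⟩)
    simp [siteOp, this]
  rw [mul_apply, ← Finset.sum_subset (Finset.subset_univ _) fun t _ ht => hoff t ht,
    Finset.sum_image fun c _ d _ h => Function.update_injective s k h]
  simp +contextual [siteOp, Function.update_of_ne]

lemma siteOp_mul_siteOp (k : Fin N) (A B : Matrix (Fin 2) (Fin 2) ℂ) :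
    siteOp k A * siteOp k B = siteOp k (A * B) := by
  ext s s'
  have hcond (c : Fin 2) : (∀ i, i ≠ k → Function.update s k c i = s' i) ↔
      ∀ i, i ≠ k → s i = s' i :=
    forall₂_congr fun i hi => by rw [Function.update_of_ne hi]
  rw [siteOp_mul_apply]
  simp only [siteOp, of_apply, hcond, Function.update_self, mul_apply]
  split_ifs <;> simp

lemma siteOp_mul_siteOp_apply_of_ne {i j : Fin N} (hij : i ≠ j) (A B : Matrix (Fin 2) (Fin 2) ℂ)
    (s s' : Cfg N) :
    (siteOp i A * siteOp j B) s s' =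
      if ∀ m, m ≠ i → m ≠ j → s m = s' m then A (s i) (s' i) * B (s j) (s' j) else 0 := by
  have hcond (c : Fin 2) : (∀ m, m ≠ j → Function.update s i c m = s' m) ↔
      c = s' i ∧ ∀ m, m ≠ i → m ≠ j → s m = s' m := by
    constructor
    · intro h
      exact ⟨by simpa using h i hij, fun m hmi hmj => by simpa [hmi] using h m hmj⟩
    · rintro ⟨rfl, h⟩ m hmj
      by_cases hmi : m = i
      · simp [hmi]
      · simpa [hmi] using h m hmi hmj
  rw [siteOp_mul_apply]
  simp only [siteOp, of_apply, hcond, Function.update_of_ne hij.symm, ite_and,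
    mul_ite, mul_zero, Finset.sum_ite_eq', Finset.mem_univ, if_true]

lemma siteOp_commute_siteOp {i j : Fin N} (hij : i ≠ j) (A B : Matrix (Fin 2) (Fin 2) ℂ) :
    Commute (siteOp i A) (siteOp j B) := by
  change siteOp i A * siteOp j B = siteOp j B * siteOp i A
  ext s s'
  rw [siteOp_mul_siteOp_apply_of_ne hij, siteOp_mul_siteOp_apply_of_ne hij.symm,
    mul_comm]
  exact if_congr (forall_congr' fun m => imp.swap) rfl rfl

lemma smul_siteOp_add_smul_siteOp (k : Fin N) (x y : ℂ) (A B : Matrix (Fin 2) (Fin 2) ℂ) :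
    x • siteOp k A + y • siteOp k B = siteOp k (x • A + y • B) := by
  ext s s'
  simp only [siteOp, Matrix.add_apply, Matrix.smul_apply, of_apply, smul_eq_mul]
  by_cases h : ∀ i, i ≠ k → s i = s' i
  · rw [if_pos h, if_pos h, if_pos h]
  · rw [if_neg h, if_neg h, if_neg h, mul_zero, mul_zero, add_zero]

def localL (l v : ℂ) : Matrix (Fin 2) (Fin 2) (Matrix (Fin 2) (Fin 2) ℂ) :=
  !![aW l v • piPlus + bW l v • piMinus, sigmaMinus;
     sigmaPlus, bW l v • piPlus + aW l v • piMinus]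

lemma Lop_apply (ν : Fin N → ℂ) (k : Fin N) (l : ℂ) (a b : Fin 2) :
    Lop ν k l a b = siteOp k (localL l (ν k) a b) := by
  fin_cases a <;> fin_cases b <;> simp [Lop, localL, smul_siteOp_add_smul_siteOp]

/-- `v` has spin up at site `k`: operators at site `k` act on `v` as 2×2 matrices act on `(1, 0)`,
with `σ⁻_k v` in the role of `(0, 1)`. -/
def SpinUpAt (k : Fin N) (v : Cfg N → ℂ) : Prop :=
  ∀ M, siteOp k M *ᵥ v = M 0 0 • v + M 1 0 • (siteOp k sigmaMinus *ᵥ v)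

lemma spinUpAt_upVec (k : Fin N) : SpinUpAt k (upVec N) := by
  intro M
  ext s
  simp only [upVec, basisVec, mulVec_single_one]
  simp only [siteOp, of_apply, col_apply, Pi.smul_apply, Pi.add_apply, smul_eq_mul,
    Pi.single_apply, mul_ite, mul_one, mul_zero]
  by_cases hs : ∀ i, i ≠ k → s i = upCfg N i
  · have hup : s = upCfg N ↔ s k = 0 :=
      ⟨fun h => h ▸ rfl, fun h => funext fun i => if hi : i = k then hi ▸ h else hs i hi⟩
    rw [if_pos hs, if_pos hs]
    rcases Fin.exists_fin_two.1 ⟨s k, rfl⟩ with h | h <;> simp [hup, h, upCfg, sigmaMinus]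
  · have hup : s ≠ upCfg N := fun h => hs fun i _ => h ▸ rfl
    simp [hs, hup]

lemma SpinUpAt.mulVec_of_commute {k : Fin N} {v : Cfg N → ℂ} (hv : SpinUpAt k v) {X : Op N}
    (hX : ∀ M, Commute (siteOp k M) X) : SpinUpAt k (X *ᵥ v) := by
  intro M
  rw [mulVec_mulVec, hX M, ← mulVec_mulVec, hv M, mulVec_add, mulVec_smul, mulVec_smul,
    mulVec_mulVec, ← hX sigmaMinus, ← mulVec_mulVec]

lemma SpinUpAt.siteOp_mulVec_sigmaMinus {k : Fin N} {v : Cfg N → ℂ} (hv : SpinUpAt k v)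
    (M : Matrix (Fin 2) (Fin 2) ℂ) :
    siteOp k M *ᵥ (siteOp k sigmaMinus *ᵥ v) = M 0 1 • v + M 1 1 • (siteOp k sigmaMinus *ᵥ v) := by
  rw [mulVec_mulVec, siteOp_mul_siteOp, hv]
  simp [sigmaMinus, mul_apply, Fin.sum_univ_two]

def partialMonodromy (ν : Fin N → ℂ) (l : ℂ) (k : ℕ) : Matrix (Fin 2) (Fin 2) (Op N) :=
  (((List.finRange N).take k).reverse.map fun i => Lop ν i l).prod

def vacuumD (ν : Fin N → ℂ) (l : ℂ) (k : ℕ) : ℂ :=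
  (((List.finRange N).take k).map fun i => bW l (ν i)).prod

lemma take_finRange_succ {k : ℕ} (hk : k < N) :
    (List.finRange N).take (k + 1) = (List.finRange N).take k ++ [⟨k, hk⟩] := by
  have hk' : k < (List.finRange N).length := by simpa using hk
  simp [List.take_add_one, List.getElem?_eq_getElem hk']

section

variable (ν : Fin N → ℂ) (l : ℂ)

lemma monodromy_eq_partialMonodromy : monodromy ν l = partialMonodromy ν l N := by
  rw [monodromy, partialMonodromy, List.take_of_length_le (by simp)]

lemma partialMonodromy_zero : partialMonodromy ν l 0 = 1 := by
  simp [partialMonodromy]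

lemma partialMonodromy_succ {k : ℕ} (hk : k < N) :
    partialMonodromy ν l (k + 1) = Lop ν ⟨k, hk⟩ l * partialMonodromy ν l k := by
  simp [partialMonodromy, take_finRange_succ hk]

lemma vacuumD_zero : vacuumD ν l 0 = 1 := by
  simp [vacuumD]

lemma vacuumD_succ {k : ℕ} (hk : k < N) :
    vacuumD ν l (k + 1) = vacuumD ν l k * bW l (ν ⟨k, hk⟩) := by
  simp [vacuumD, take_finRange_succ hk]

lemma vacuumD_eq_zero_of_lt {j : Fin N} {k : ℕ} (hjk : (j : ℕ) < k) : vacuumD ν (ν j) k = 0 := by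
  refine List.prod_eq_zero (List.mem_map.2 ⟨j, ?_, by simp [bW]⟩)
  exact List.mem_take_iff_getElem.2 ⟨j, by simp; omega, by simp⟩

lemma siteOp_commute_partialMonodromy {k : ℕ} {P : Fin N} (hkP : k ≤ P)
    (M : Matrix (Fin 2) (Fin 2) ℂ) (a b : Fin 2) :
    Commute (siteOp P M) (partialMonodromy ν l k a b) := by
  induction k generalizing a b with
  | zero =>
    rw [partialMonodromy_zero]
    by_cases hab : a = b
    · rw [hab, one_apply_eq]
      exact Commute.one_right _
    · rw [one_apply_ne hab]
      exact Commute.zero_right _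
  | succ k ih =>
    have hk : k < N := by omega
    have hne : P ≠ ⟨k, hk⟩ := Fin.ne_of_val_ne (by dsimp; omega)
    rw [partialMonodromy_succ ν l hk, mul_apply, Fin.sum_univ_two, Lop_apply, Lop_apply]
    exact (((siteOp_commute_siteOp hne _ _).mul_right (ih (by omega) 0 b)).add_right
      ((siteOp_commute_siteOp hne _ _).mul_right (ih (by omega) 1 b)))

lemma SpinUpAt.partialMonodromy_mulVec {k : ℕ} {P : Fin N} (hkP : k ≤ P) {v : Cfg N → ℂ}
    (hv : SpinUpAt P v) (a b : Fin 2) : SpinUpAt P (partialMonodromy ν l k a b *ᵥ v) :=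
  hv.mulVec_of_commute fun M => siteOp_commute_partialMonodromy ν l hkP M a b

lemma partialMonodromy_mulVec_siteOp_mulVec {k : ℕ} {P : Fin N} (hkP : k ≤ P)
    (M : Matrix (Fin 2) (Fin 2) ℂ) (a b : Fin 2) (x : Cfg N → ℂ) :
    partialMonodromy ν l k a b *ᵥ (siteOp P M *ᵥ x) =
      siteOp P M *ᵥ (partialMonodromy ν l k a b *ᵥ x) := by
  rw [mulVec_mulVec, mulVec_mulVec, siteOp_commute_partialMonodromy ν l hkP M a b]

lemma partialMonodromy_succ_mulVec {k : ℕ} (hk : k < N) (a b : Fin 2) (x : Cfg N → ℂ) :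
    partialMonodromy ν l (k + 1) a b *ᵥ x =
      siteOp ⟨k, hk⟩ (localL l (ν ⟨k, hk⟩) a 0) *ᵥ (partialMonodromy ν l k 0 b *ᵥ x) +
        siteOp ⟨k, hk⟩ (localL l (ν ⟨k, hk⟩) a 1) *ᵥ (partialMonodromy ν l k 1 b *ᵥ x) := by
  rw [partialMonodromy_succ ν l hk, mul_apply, Fin.sum_univ_two, add_mulVec, Lop_apply, Lop_apply,
    ← mulVec_mulVec, ← mulVec_mulVec]

variable {k : ℕ} (hk : k < N) {w : Cfg N → ℂ}

lemma partialMonodromy_succ_zero_one_mulVec (hw : SpinUpAt ⟨k, hk⟩ w) :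
    partialMonodromy ν l (k + 1) 0 1 *ᵥ w = aW l (ν ⟨k, hk⟩) • (partialMonodromy ν l k 0 1 *ᵥ w) +
      siteOp ⟨k, hk⟩ sigmaMinus *ᵥ (partialMonodromy ν l k 1 1 *ᵥ w) := by
  have hkP : k ≤ (⟨k, hk⟩ : Fin N) := le_rfl
  rw [partialMonodromy_succ_mulVec ν l hk, hw.partialMonodromy_mulVec ν l hkP]
  simp [localL, piPlus, piMinus]

lemma partialMonodromy_succ_zero_one_mulVec_sigmaMinus (hw : SpinUpAt ⟨k, hk⟩ w) :
    partialMonodromy ν l (k + 1) 0 1 *ᵥ (siteOp ⟨k, hk⟩ sigmaMinus *ᵥ w) =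
      bW l (ν ⟨k, hk⟩) • (siteOp ⟨k, hk⟩ sigmaMinus *ᵥ (partialMonodromy ν l k 0 1 *ᵥ w)) := by
  have hkP : k ≤ (⟨k, hk⟩ : Fin N) := le_rfl
  rw [partialMonodromy_succ_mulVec ν l hk, partialMonodromy_mulVec_siteOp_mulVec ν l hkP,
    partialMonodromy_mulVec_siteOp_mulVec ν l hkP,
    (hw.partialMonodromy_mulVec ν l hkP 0 1).siteOp_mulVec_sigmaMinus,
    (hw.partialMonodromy_mulVec ν l hkP 1 1).siteOp_mulVec_sigmaMinus]
  simp [localL, piPlus, piMinus, sigmaMinus]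

lemma partialMonodromy_succ_one_one_mulVec (hw : SpinUpAt ⟨k, hk⟩ w) :
    partialMonodromy ν l (k + 1) 1 1 *ᵥ w =
      bW l (ν ⟨k, hk⟩) • (partialMonodromy ν l k 1 1 *ᵥ w) := by
  have hkP : k ≤ (⟨k, hk⟩ : Fin N) := le_rfl
  rw [partialMonodromy_succ_mulVec ν l hk, hw.partialMonodromy_mulVec ν l hkP 1 1,
    hw.partialMonodromy_mulVec ν l hkP 0 1]
  simp [localL, piPlus, piMinus, sigmaPlus]

lemma partialMonodromy_succ_one_one_mulVec_sigmaMinus (hw : SpinUpAt ⟨k, hk⟩ w) :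
    partialMonodromy ν l (k + 1) 1 1 *ᵥ (siteOp ⟨k, hk⟩ sigmaMinus *ᵥ w) =
      partialMonodromy ν l k 0 1 *ᵥ w +
        aW l (ν ⟨k, hk⟩) • (siteOp ⟨k, hk⟩ sigmaMinus *ᵥ (partialMonodromy ν l k 1 1 *ᵥ w)) := by
  have hkP : k ≤ (⟨k, hk⟩ : Fin N) := le_rfl
  rw [partialMonodromy_succ_mulVec ν l hk, partialMonodromy_mulVec_siteOp_mulVec ν l hkP,
    partialMonodromy_mulVec_siteOp_mulVec ν l hkP,
    (hw.partialMonodromy_mulVec ν l hkP 0 1).siteOp_mulVec_sigmaMinus,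
    (hw.partialMonodromy_mulVec ν l hkP 1 1).siteOp_mulVec_sigmaMinus]
  simp [localL, piPlus, piMinus, sigmaPlus]

end

lemma partialMonodromy_one_one_mulVec_upVec (ν : Fin N → ℂ) (l : ℂ) {k : ℕ} (hk : k ≤ N) :
    partialMonodromy ν l k 1 1 *ᵥ upVec N = vacuumD ν l k • upVec N := by
  induction k with
  | zero => simp [partialMonodromy_zero, vacuumD_zero]
  | succ k ih =>
    rw [partialMonodromy_succ_one_one_mulVec ν l hk (spinUpAt_upVec _), ih (by omega),
      vacuumD_succ ν l hk, smul_smul, mul_comm]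

lemma partialMonodromy_succ_zero_one_mulVec_upVec (ν : Fin N → ℂ) (l : ℂ) {k : ℕ} (hk : k < N) :
    partialMonodromy ν l (k + 1) 0 1 *ᵥ upVec N =
      aW l (ν ⟨k, hk⟩) • (partialMonodromy ν l k 0 1 *ᵥ upVec N) +
        vacuumD ν l k • (siteOp ⟨k, hk⟩ sigmaMinus *ᵥ upVec N) := by
  rw [partialMonodromy_succ_zero_one_mulVec ν l hk (spinUpAt_upVec _),
    partialMonodromy_one_one_mulVec_upVec ν l hk.le, mulVec_smul]

def bbVec (ν : Fin N → ℂ) (μ : ℂ) (k : ℕ) : Cfg N → ℂ :=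
  partialMonodromy ν μ k 0 1 *ᵥ (partialMonodromy ν (μ - 1) k 0 1 *ᵥ upVec N)

def dbVec (ν : Fin N → ℂ) (μ : ℂ) (k : ℕ) : Cfg N → ℂ :=
  vacuumD ν (μ - 1) k • (partialMonodromy ν μ k 0 1 *ᵥ upVec N) +
    partialMonodromy ν μ k 1 1 *ᵥ (partialMonodromy ν (μ - 1) k 0 1 *ᵥ upVec N)

section

variable (ν : Fin N → ℂ) (μ : ℂ) {k : ℕ} (hk : k < N)

lemma bbVec_succ :
    bbVec ν μ (k + 1) = (aW μ (ν ⟨k, hk⟩) * bW μ (ν ⟨k, hk⟩)) • bbVec ν μ k +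
      bW μ (ν ⟨k, hk⟩) • (siteOp ⟨k, hk⟩ sigmaMinus *ᵥ dbVec ν μ k) := by
  have hB' := (spinUpAt_upVec (N := N) ⟨k, hk⟩).partialMonodromy_mulVec ν (μ - 1) le_rfl 0 1
  rw [bbVec, dbVec, bbVec, partialMonodromy_succ_zero_one_mulVec_upVec ν (μ - 1) hk, mulVec_add,
    mulVec_smul, mulVec_smul, partialMonodromy_succ_zero_one_mulVec ν μ hk hB',
    partialMonodromy_succ_zero_one_mulVec_sigmaMinus ν μ hk (spinUpAt_upVec _),
    mulVec_add, mulVec_smul]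
  simp only [aW, bW]
  module

lemma dbVec_succ :
    dbVec ν μ (k + 1) = bW μ (ν ⟨k, hk⟩) ^ 2 • dbVec ν μ k +
      (2 * bW μ (ν ⟨k, hk⟩) * vacuumD ν μ k * vacuumD ν (μ - 1) k) •
        (siteOp ⟨k, hk⟩ sigmaMinus *ᵥ upVec N) := by
  have hB' := (spinUpAt_upVec (N := N) ⟨k, hk⟩).partialMonodromy_mulVec ν (μ - 1) le_rfl 0 1
  rw [dbVec, dbVec, vacuumD_succ ν (μ - 1) hk, partialMonodromy_succ_zero_one_mulVec_upVec ν μ hk,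
    partialMonodromy_succ_zero_one_mulVec_upVec ν (μ - 1) hk, mulVec_add, mulVec_smul, mulVec_smul,
    partialMonodromy_succ_one_one_mulVec ν μ hk hB',
    partialMonodromy_succ_one_one_mulVec_sigmaMinus ν μ hk (spinUpAt_upVec _),
    partialMonodromy_one_one_mulVec_upVec ν μ hk.le, mulVec_smul]
  simp only [aW, bW]
  module

end

lemma dbVec_eq_zero_and_bbVec_eq_zero (ν : Fin N → ℂ) (j : Fin N) {k : ℕ} (hk : k ≤ N)
    (hjk : (j : ℕ) < k) : dbVec ν (ν j) k = 0 ∧ bbVec ν (ν j) k = 0 := by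
  induction k with
  | zero => omega
  | succ k ih =>
    have hk' : k < N := hk
    rw [dbVec_succ ν (ν j) hk', bbVec_succ ν (ν j) hk']
    rcases Nat.lt_succ_iff_lt_or_eq.1 hjk with hlt | rfl
    · obtain ⟨hdb, hbb⟩ := ih hk'.le hlt
      simp [hdb, hbb, vacuumD_eq_zero_of_lt ν hlt]
    · simp [bW]

end SixVertex

open SixVertex in
theorem nullBetheVec_general (N : ℕ) (ν : Fin N → ℂ) (j : Fin N) :
    (Bop ν (ν j)).mulVec ((Bop ν (ν j - 1)).mulVec (upVec N)) = 0 := by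
  simpa [bbVec, Bop, monodromy_eq_partialMonodromy] using
    (dbVec_eq_zero_and_bbVec_eq_zero ν j le_rfl j.isLt).2

open SixVertex in
/-- for pairwise distinct `ν`, the vector `B(ν_j) B(ν_j - 1) |⇑⟩` is zero. -/
theorem nullBetheVec (N : ℕ) (hN : 1 ≤ N) (ν : Fin N → ℂ)
    (hν : Function.Injective ν) (j : Fin N) :
    (Bop ν (ν j)).mulVec ((Bop ν (ν j - 1)).mulVec (upVec N)) = 0 :=
  nullBetheVec_general N ν j
end

section
/- For any ν_1,…,ν_N ∈ ℂ and each j = 1,…,N, the operator B(ν_j) flips the j-th spin of the basis vector with spins up at sites N, N−1, …, j and spins down at sites j−1, …, 1: B(ν_j) |↑_N … ↑_{j+1} ↑_j ↓_{j−1} … ↓_1⟩ = a(ν_j) |↑_N … ↑_{j+1} ↓_j ↓_{j−1} … ↓_1⟩, where a(λ) = ∏_{k=1}^N (λ − ν_k + 1). -/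
open scoped BigOperators
noncomputable section
namespace SixVertex

lemma siteOp_mulVec {N : ℕ} (k : Fin N) (M : Matrix (Fin 2) (Fin 2) ℂ) (s : Cfg N) :
    (siteOp k M).mulVec (basisVec s) =
      M 0 (s k) • basisVec (Function.update s k 0) +
      M 1 (s k) • basisVec (Function.update s k 1) := by
  funext t
  have hL : (siteOp k M).mulVec (basisVec s) t =
      (if ∀ i, i ≠ k → t i = s i then M (t k) (s k) else 0) := by
    simp [Matrix.mulVec, dotProduct, basisVec, Pi.single_apply, siteOp]
  rw [hL]
  have hR : (M 0 (s k) • basisVec (Function.update s k 0) +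
      M 1 (s k) • basisVec (Function.update s k 1)) t =
      M 0 (s k) * (if t = Function.update s k 0 then 1 else 0) +
      M 1 (s k) * (if t = Function.update s k 1 then 1 else 0) := by
    simp [basisVec, Pi.single_apply]
  rw [hR]
  by_cases h : ∀ i, i ≠ k → t i = s i
  · rw [if_pos h]
    have ht : t = Function.update s k (t k) := by
      funext i
      by_cases hi : i = k
      · subst hi; simp
      · simp [Function.update, hi, h i hi]
    by_cases h0 : t k = 0
    · have h1 : t ≠ Function.update s k 1 := by
        intro he
        have := congrFun he k
        simp [h0] at this
      rw [if_pos (by rw [ht, h0]), if_neg h1, h0]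
      ring
    · have h0' : t k = 1 := by omega
      have h1 : t ≠ Function.update s k 0 := by
        intro he
        have := congrFun he k
        simp [h0'] at this
      rw [if_neg h1, if_pos (by rw [ht, h0']), h0']
      ring
  · rw [if_neg h]
    push_neg at h
    obtain ⟨i, hik, hti⟩ := h
    have h1 : ∀ c : Fin 2, t ≠ Function.update s k c := by
      intro c he
      apply hti
      have := congrFun he i
      rwa [Function.update_of_ne hik] at this
    rw [if_neg (h1 0), if_neg (h1 1)]
    ring

/-- Partial monodromy: product of the first `m` L-operators. -/
def Ppart {N : ℕ} (ν : Fin N → ℂ) (l : ℂ) (m : ℕ) : Matrix (Fin 2) (Fin 2) (Op N) :=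
  ((((List.finRange N).take m).reverse).map fun k => Lop ν k l).prod

lemma Ppart_zero {N : ℕ} (ν : Fin N → ℂ) (l : ℂ) : Ppart ν l 0 = 1 := rfl

lemma Ppart_succ {N : ℕ} (ν : Fin N → ℂ) (l : ℂ) {m : ℕ} (hm : m < N) :
    Ppart ν l (m + 1) = Lop ν ⟨m, hm⟩ l * Ppart ν l m := by
  have h1 : (List.finRange N)[m]? = some ⟨m, hm⟩ := by
    rw [List.getElem?_eq_getElem (by simpa using hm)]
    simp [List.getElem_finRange, Fin.cast]
  unfold Ppart
  rw [List.take_succ, h1]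
  simp

lemma Ppart_top {N : ℕ} (ν : Fin N → ℂ) (l : ℂ) :
    Ppart ν l N = monodromy ν l := by
  unfold Ppart monodromy
  rw [List.take_of_length_le (by simp)]

lemma coeff_succ {N : ℕ} (f : Fin N → ℂ) {m : ℕ} (hm : m < N) :
    ∏ k ∈ Finset.univ.filter (fun k : Fin N => (k : ℕ) < m + 1), f k =
      f ⟨m, hm⟩ * ∏ k ∈ Finset.univ.filter (fun k : Fin N => (k : ℕ) < m), f k := by
  rw [show (Finset.univ.filter fun k : Fin N => (k : ℕ) < m + 1) =
      insert ⟨m, hm⟩ (Finset.univ.filter fun k : Fin N => (k : ℕ) < m) by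
    ext k
    simp only [Finset.mem_insert, Finset.mem_filter, Finset.mem_univ, true_and, Fin.ext_iff]
    omega]
  exact Finset.prod_insert (by simp)

lemma key_induction {N : ℕ} (ν : Fin N → ℂ) (j : Fin N) (m : ℕ) (hm : m ≤ N) :
    ((Ppart ν (ν j) m 0 1).mulVec
        (basisVec (fun i : Fin N => if (i : ℕ) < (j : ℕ) then 1 else 0)) =
      (if (j : ℕ) < m then
          ∏ k ∈ Finset.univ.filter (fun k : Fin N => (k : ℕ) < m), (ν j - ν k + 1)
        else 0) •
        basisVec (fun i : Fin N => if (i : ℕ) < (j : ℕ) + 1 then 1 else 0)) ∧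
    ((Ppart ν (ν j) m 1 1).mulVec
        (basisVec (fun i : Fin N => if (i : ℕ) < (j : ℕ) then 1 else 0)) =
      (if (j : ℕ) < m then 0
        else ∏ k ∈ Finset.univ.filter (fun k : Fin N => (k : ℕ) < m), (ν j - ν k + 1)) •
        basisVec (fun i : Fin N => if (i : ℕ) < (j : ℕ) then 1 else 0)) := by
  set s : Cfg N := fun i : Fin N => if (i : ℕ) < (j : ℕ) then 1 else 0 with hs
  set s' : Cfg N := fun i : Fin N => if (i : ℕ) < (j : ℕ) + 1 then 1 else 0 with hs'
  induction m with
  | zero =>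
      rw [Ppart_zero]
      constructor
      · rw [show (1 : Matrix (Fin 2) (Fin 2) (Op N)) 0 1 = 0 from Matrix.one_apply_ne (by decide)]
        simp
      · rw [show (1 : Matrix (Fin 2) (Fin 2) (Op N)) 1 1 = 1 from Matrix.one_apply_eq 1]
        simp
  | succ m ih =>
      have hmN : m < N := hm
      obtain ⟨ih1, ih2⟩ := ih (le_of_lt hmN)
      set km : Fin N := ⟨m, hmN⟩ with hkm
      rw [Ppart_succ ν (ν j) hmN]
      have e01 : (Lop ν km (ν j) * Ppart ν (ν j) m) 0 1 =
          Lop ν km (ν j) 0 0 * Ppart ν (ν j) m 0 1 +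
          Lop ν km (ν j) 0 1 * Ppart ν (ν j) m 1 1 := by
        rw [Matrix.mul_apply, Fin.sum_univ_two]
      have e11 : (Lop ν km (ν j) * Ppart ν (ν j) m) 1 1 =
          Lop ν km (ν j) 1 0 * Ppart ν (ν j) m 0 1 +
          Lop ν km (ν j) 1 1 * Ppart ν (ν j) m 1 1 := by
        rw [Matrix.mul_apply, Fin.sum_univ_two]
      have L00 : Lop ν km (ν j) 0 0 =
          aW (ν j) (ν km) • siteOp km piPlus + bW (ν j) (ν km) • siteOp km piMinus := by
        simp [Lop]
      have L01 : Lop ν km (ν j) 0 1 = siteOp km sigmaMinus := by simp [Lop]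
      have L10 : Lop ν km (ν j) 1 0 = siteOp km sigmaPlus := by simp [Lop]
      have L11 : Lop ν km (ν j) 1 1 =
          bW (ν j) (ν km) • siteOp km piPlus + aW (ν j) (ν km) • siteOp km piMinus := by
        simp [Lop]
      rcases lt_trichotomy m (j : ℕ) with hc | hc | hc
      · -- m < j : site m carries a down spin
        have hskm : s km = 1 := if_pos hc
        have hupd : Function.update s km 1 = s := by
          conv_lhs => rw [← hskm]
          exact Function.update_eq_self km s
        have hif : ¬ ((j : ℕ) < m) := by omega
        have hif' : ¬ ((j : ℕ) < m + 1) := by omega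
        rw [if_neg hif] at ih1 ih2
        rw [zero_smul] at ih1
        constructor
        · rw [e01, Matrix.add_mulVec, ← Matrix.mulVec_mulVec, ← Matrix.mulVec_mulVec,
            ih1, ih2, Matrix.mulVec_zero, L01, if_neg hif']
          simp only [Matrix.mulVec_smul, siteOp_mulVec, hskm]
          simp [sigmaMinus]
        · rw [e11, Matrix.add_mulVec, ← Matrix.mulVec_mulVec, ← Matrix.mulVec_mulVec,
            ih1, ih2, Matrix.mulVec_zero, L11, if_neg hif', coeff_succ _ hmN]
          simp only [Matrix.mulVec_smul, Matrix.add_mulVec, Matrix.smul_mulVec,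
            siteOp_mulVec, hskm, hupd]
          simp [piPlus, piMinus, aW, smul_smul]
          module
      · -- m = j : the spin gets flipped
        have hkj : km = j := Fin.ext hc
        have hskm : s km = 0 := if_neg (by omega)
        have hupd1 : Function.update s km 1 = s' := by
          funext i
          by_cases hi : i = km
          · subst hi
            simp only [Function.update_self]
            exact (if_pos (show m < (j : ℕ) + 1 by omega)).symm
          · rw [Function.update_of_ne hi]
            have hine : (i : ℕ) ≠ m := fun he => hi (Fin.ext he)
            show (if (i : ℕ) < (j : ℕ) then (1 : Fin 2) else 0) =
              (if (i : ℕ) < (j : ℕ) + 1 then 1 else 0)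
            by_cases h2 : (i : ℕ) < (j : ℕ)
            · rw [if_pos h2, if_pos (by omega)]
            · rw [if_neg h2, if_neg (by omega)]
        have hbW : bW (ν j) (ν km) = 0 := by rw [hkj]; simp [bW]
        have hif : ¬ ((j : ℕ) < m) := by omega
        have hif' : (j : ℕ) < m + 1 := by omega
        rw [if_neg hif] at ih1 ih2
        rw [zero_smul] at ih1
        constructor
        · rw [e01, Matrix.add_mulVec, ← Matrix.mulVec_mulVec, ← Matrix.mulVec_mulVec,
            ih1, ih2, Matrix.mulVec_zero, L01, if_pos hif', coeff_succ _ hmN]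
          simp only [Matrix.mulVec_smul, siteOp_mulVec, hskm, hupd1]
          simp [sigmaMinus, ← hkm, hkj, aW]
        · rw [e11, Matrix.add_mulVec, ← Matrix.mulVec_mulVec, ← Matrix.mulVec_mulVec,
            ih1, ih2, Matrix.mulVec_zero, L11, hbW, if_pos hif']
          simp only [Matrix.mulVec_smul, Matrix.add_mulVec, Matrix.smul_mulVec,
            siteOp_mulVec, hskm]
          simp [piPlus, piMinus]
      · -- m > j : site m carries an up spin in the flipped configuration
        have hskm' : s' km = 0 := if_neg (show ¬ (m < (j : ℕ) + 1) by omega)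
        have hupd : Function.update s' km 0 = s' := by
          conv_lhs => rw [← hskm']
          exact Function.update_eq_self km s'
        have hif : (j : ℕ) < m := hc
        have hif' : (j : ℕ) < m + 1 := by omega
        rw [if_pos hif] at ih1 ih2
        rw [zero_smul] at ih2
        constructor
        · rw [e01, Matrix.add_mulVec, ← Matrix.mulVec_mulVec, ← Matrix.mulVec_mulVec,
            ih1, ih2, Matrix.mulVec_zero, L00, if_pos hif', coeff_succ _ hmN]
          simp only [Matrix.mulVec_smul, Matrix.add_mulVec, Matrix.smul_mulVec,
            siteOp_mulVec, hskm', hupd]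
          simp [piPlus, piMinus, aW, smul_smul]
          module
        · rw [e11, Matrix.add_mulVec, ← Matrix.mulVec_mulVec, ← Matrix.mulVec_mulVec,
            ih1, ih2, Matrix.mulVec_zero, L10, if_pos hif']
          simp only [Matrix.mulVec_smul, siteOp_mulVec, hskm']
          simp [sigmaPlus]
end SixVertex

end

open SixVertex in
/-- the operator `B(ν_j)` flips the `j`-th spin of the basis vector with
spins up at sites `N,…,j` and down at sites `j-1,…,1`, producing the factor
`a(ν_j) = ∏_{k=1}^N (ν_j - ν_k + 1)`.  (Site `k` of the paper corresponds to the index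
`k-1 : Fin N`, so the configuration has spin down exactly at indices `< j`.) -/
theorem Bop_spin_flip (N : ℕ) (hN : 1 ≤ N) (ν : Fin N → ℂ) (j : Fin N) :
    (Bop ν (ν j)).mulVec
        (basisVec (fun i : Fin N => if (i : ℕ) < (j : ℕ) then 1 else 0)) =
      (∏ k, (ν j - ν k + 1)) •
        basisVec (fun i : Fin N => if (i : ℕ) < (j : ℕ) + 1 then 1 else 0) := by
  have h := (key_induction ν j N le_rfl).1
  rw [Ppart_top, if_pos j.isLt,
    Finset.filter_true_of_mem (fun k _ => k.isLt)] at h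
  exact h
end

section
/- For any ν_1,…,ν_N ∈ ℂ, B(ν_N) B(ν_{N−1}) ⋯ B(ν_1) |⇑⟩ = (∏_{k=1}^N a(ν_k)) |⇓⟩, where a(λ) = ∏_{k=1}^N (λ − ν_k + 1); in particular the partition function satisfies Z_N(ν_1,…,ν_N) = ∏_{k=1}^N a(ν_k). -/
open scoped BigOperators
/-!
On basis vectors every entry of an L-operator either acts diagonally or flips the spin at its
site. Let `|m⟩` be the configuration whose first `m` spins are down and follow the column
`(B, D)` of the monodromy matrix at `λ = ν_m` applied to `|m⟩`, site by site. Below site `m`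
the spins are down and the state stays in the `D` channel with weight `a`; at site `m` the
weight `b(ν_m, ν_m) = 0` kills the `D` channel while `σ⁻` moves it to the `B` channel, flipping
spin `m`; above site `m` the spins are up and the `B` channel again picks up weight `a`. Hence
`B(ν_m)|m⟩ = a(ν_m)|m+1⟩`, and iterating from `|⇑⟩ = |0⟩` reaches `|⇓⟩ = |N⟩`.
-/

namespace SixVertex

open Matrix

variable {N : ℕ}

lemma siteOp_mulVec_basisVec (k : Fin N) (M : Matrix (Fin 2) (Fin 2) ℂ) (s : Cfg N) :
    siteOp k M *ᵥ basisVec s = ∑ t, M t (s k) • basisVec (Function.update s k t) := by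
  funext s'
  simp [basisVec, siteOp, Pi.single_apply, Function.eq_update_iff, ite_and,
    Finset.sum_ite_eq]

section Lop

variable (ν : Fin N → ℂ) (k : Fin N) (l : ℂ) (s : Cfg N)

lemma Lop_zero_zero_mulVec :
    Lop ν k l 0 0 *ᵥ basisVec s = (if s k = 0 then aW l (ν k) else bW l (ν k)) • basisVec s := by
  rcases (show s k = 0 ∨ s k = 1 by omega) with h | h <;>
    simp [Lop, add_mulVec, smul_mulVec, siteOp_mulVec_basisVec, h, piPlus, piMinus] <;>
    rw [← h, Function.update_eq_self]

lemma Lop_zero_one_mulVec :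
    Lop ν k l 0 1 *ᵥ basisVec s = if s k = 0 then basisVec (Function.update s k 1) else 0 := by
  rcases (show s k = 0 ∨ s k = 1 by omega) with h | h <;>
    simp [Lop, siteOp_mulVec_basisVec, h, sigmaMinus]

lemma Lop_one_zero_mulVec :
    Lop ν k l 1 0 *ᵥ basisVec s = if s k = 1 then basisVec (Function.update s k 0) else 0 := by
  rcases (show s k = 0 ∨ s k = 1 by omega) with h | h <;>
    simp [Lop, siteOp_mulVec_basisVec, h, sigmaPlus]

lemma Lop_one_one_mulVec :
    Lop ν k l 1 1 *ᵥ basisVec s = (if s k = 0 then bW l (ν k) else aW l (ν k)) • basisVec s := by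
  rcases (show s k = 0 ∨ s k = 1 by omega) with h | h <;>
    simp [Lop, add_mulVec, smul_mulVec, siteOp_mulVec_basisVec, h, piPlus, piMinus] <;>
    rw [← h, Function.update_eq_self]

end Lop

lemma fin_two_mul_apply_mulVec {n R : Type*} [Fintype n] [NonUnitalSemiring R]
    (M T : Matrix (Fin 2) (Fin 2) (Matrix n n R)) (i j : Fin 2) (v : n → R) :
    (M * T) i j *ᵥ v = M i 0 *ᵥ (T 0 j *ᵥ v) + M i 1 *ᵥ (T 1 j *ᵥ v) := by
  simp [mul_apply, Fin.sum_univ_two, add_mulVec, mulVec_mulVec]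

section Transfer

variable {ν : Fin N → ℂ} {k : Fin N} {l x : ℂ} {s : Cfg N}
  {T : Matrix (Fin 2) (Fin 2) (Op N)} {v : Cfg N → ℂ}

lemma Lop_mul_of_down (hs : s k = 1) (h0 : T 0 1 *ᵥ v = 0) (h1 : T 1 1 *ᵥ v = x • basisVec s) :
    (Lop ν k l * T) 0 1 *ᵥ v = 0 ∧
      (Lop ν k l * T) 1 1 *ᵥ v = (aW l (ν k) * x) • basisVec s := by
  simp [fin_two_mul_apply_mulVec, h0, h1, mulVec_smul, Lop_zero_one_mulVec, Lop_one_one_mulVec,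
    hs, smul_smul, mul_comm]

lemma Lop_mul_of_up (hs : s k = 0) (h0 : T 0 1 *ᵥ v = x • basisVec s) (h1 : T 1 1 *ᵥ v = 0) :
    (Lop ν k l * T) 0 1 *ᵥ v = (aW l (ν k) * x) • basisVec s ∧
      (Lop ν k l * T) 1 1 *ᵥ v = 0 := by
  simp [fin_two_mul_apply_mulVec, h0, h1, mulVec_smul, Lop_zero_zero_mulVec, Lop_one_zero_mulVec,
    hs, smul_smul, mul_comm]

lemma Lop_self_mul_flip (hs : s k = 0) (h0 : T 0 1 *ᵥ v = 0) (h1 : T 1 1 *ᵥ v = x • basisVec s) :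
    (Lop ν k (ν k) * T) 0 1 *ᵥ v = x • basisVec (Function.update s k 1) ∧
      (Lop ν k (ν k) * T) 1 1 *ᵥ v = 0 := by
  simp [fin_two_mul_apply_mulVec, h0, h1, mulVec_smul, Lop_zero_one_mulVec, Lop_one_one_mulVec,
    hs, bW]

lemma prod_Lop_of_down (ks : List (Fin N)) (hs : ∀ k ∈ ks, s k = 1) :
    (ks.map fun k => Lop ν k l).prod 0 1 *ᵥ basisVec s = 0 ∧
      (ks.map fun k => Lop ν k l).prod 1 1 *ᵥ basisVec s =
        (ks.map fun k => aW l (ν k)).prod • basisVec s := by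
  induction ks with
  | nil => simp
  | cons k ks ih =>
    obtain ⟨h0, h1⟩ := ih fun j hj => hs j (List.mem_cons_of_mem k hj)
    simpa only [List.map_cons, List.prod_cons] using Lop_mul_of_down (hs k List.mem_cons_self) h0 h1

lemma prod_Lop_mul_of_up (ks : List (Fin N)) (hs : ∀ k ∈ ks, s k = 0)
    (h0 : T 0 1 *ᵥ v = x • basisVec s) (h1 : T 1 1 *ᵥ v = 0) :
    ((ks.map fun k => Lop ν k l).prod * T) 0 1 *ᵥ v =
        ((ks.map fun k => aW l (ν k)).prod * x) • basisVec s ∧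
      ((ks.map fun k => Lop ν k l).prod * T) 1 1 *ᵥ v = 0 := by
  induction ks with
  | nil => simpa using ⟨h0, h1⟩
  | cons k ks ih =>
    obtain ⟨h0', h1'⟩ := ih fun j hj => hs j (List.mem_cons_of_mem k hj)
    simpa only [List.map_cons, List.prod_cons, mul_assoc] using
      Lop_mul_of_up (hs k List.mem_cons_self) h0' h1'

end Transfer

def stepCfg (N m : ℕ) : Cfg N := fun i => if i.val < m then 1 else 0

lemma stepCfg_zero : stepCfg N 0 = upCfg N := by
  funext i
  simp [stepCfg, upCfg]

lemma stepCfg_self : stepCfg N N = downCfg N := by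
  funext i
  simp [stepCfg, downCfg]

lemma update_stepCfg (m : Fin N) : Function.update (stepCfg N m) m 1 = stepCfg N (m + 1) := by
  funext i
  rcases eq_or_ne i m with rfl | h
  · simp [stepCfg]
  · simp [stepCfg, h, le_iff_lt_or_eq, Fin.val_inj]

lemma val_lt_of_mem_take_finRange {m : ℕ} {k : Fin N} (h : k ∈ (List.finRange N).take m) :
    k.val < m := by
  obtain ⟨i, hi, rfl⟩ := List.mem_iff_getElem.mp h
  simp only [List.length_take, List.length_finRange, lt_inf_iff] at hi
  simpa using hi.1

lemma le_val_of_mem_drop_finRange {m : ℕ} {k : Fin N} (h : k ∈ (List.finRange N).drop m) :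
    m ≤ k.val := by
  obtain ⟨i, hi, rfl⟩ := List.mem_iff_getElem.mp h
  simp

lemma finRange_eq_take_append_cons_drop (m : Fin N) :
    List.finRange N = (List.finRange N).take m ++ m :: (List.finRange N).drop (m + 1) := by
  conv_lhs => rw [← List.take_append_drop m (List.finRange N), List.drop_eq_getElem_cons (by simp)]
  simp

lemma Bop_mulVec_stepCfg (ν : Fin N → ℂ) (m : Fin N) :
    Bop ν (ν m) *ᵥ basisVec (stepCfg N m) =
      (∏ i, aW (ν m) (ν i)) • basisVec (stepCfg N (m + 1)) := by
  set lo := ((List.finRange N).take m).reverse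
  set hi := ((List.finRange N).drop (m + 1)).reverse
  have hsplit : (List.finRange N).reverse = hi ++ m :: lo := by
    conv_lhs => rw [finRange_eq_take_append_cons_drop m]
    simp [lo, hi]
  have hlo := prod_Lop_of_down (ν := ν) (l := ν m) (s := stepCfg N m) lo fun k hk => by
    simp [stepCfg, val_lt_of_mem_take_finRange (List.mem_reverse.mp hk)]
  have hflip := Lop_self_mul_flip (ν := ν) (k := m) (by simp [stepCfg]) hlo.1 hlo.2
  rw [update_stepCfg] at hflip
  have hup : ∀ k ∈ hi, stepCfg N (m + 1) k = 0 := fun k hk => by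
    have := le_val_of_mem_drop_finRange (List.mem_reverse.mp hk)
    simp [stepCfg]
    omega
  have hhi := prod_Lop_mul_of_up (ν := ν) (l := ν m) hi hup hflip.1 hflip.2
  rw [Bop, monodromy, hsplit, List.map_append, List.prod_append, List.map_cons, List.prod_cons,
    hhi.1, Fin.prod_univ_def, finRange_eq_take_append_cons_drop m]
  simp [lo, hi, aW, List.map_reverse, List.prod_reverse, mul_comm]

lemma prod_Bop_take_mulVec_upVec (ν : Fin N → ℂ) {k : ℕ} (hk : k ≤ N) :
    (((List.finRange N).take k).reverse.map fun j => Bop ν (ν j)).prod *ᵥ upVec N =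
      (((List.finRange N).take k).map fun i => ∏ j, aW (ν i) (ν j)).prod •
        basisVec (stepCfg N k) := by
  induction k with
  | zero => simp [stepCfg_zero, upVec]
  | succ k ih =>
    have htake : (List.finRange N).take (k + 1) = (List.finRange N).take k ++ [⟨k, hk⟩] := by
      simp [List.take_add_one,
        List.getElem?_eq_getElem (show k < (List.finRange N).length by simpa using hk)]
    have hB := Bop_mulVec_stepCfg ν ⟨k, hk⟩
    rw [htake, List.reverse_append, List.map_append, List.prod_append, ← mulVec_mulVec,
      ih (by omega)]
    simp only [List.reverse_singleton, List.map_singleton, List.prod_singleton] at hB ⊢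
    rw [mulVec_smul, hB, smul_smul, List.map_append, List.prod_append]
    simp [mul_comm]

end SixVertex

open SixVertex in
theorem Bprod_up_eq_down_general (N : ℕ) (ν : Fin N → ℂ) :
    ((((List.finRange N).reverse).map fun k => Bop ν (ν k)).prod).mulVec (upVec N) =
        (∏ k, ∏ l, (ν k - ν l + 1)) • downVec N ∧
      Zfun N ν ν = ∏ k, ∏ l, (ν k - ν l + 1) := by
  have hB := prod_Bop_take_mulVec_upVec ν (le_refl N)
  rw [List.take_of_length_le (by simp), ← Fin.prod_univ_def, stepCfg_self] at hB
  simp only [aW] at hB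
  refine ⟨hB, ?_⟩
  simpa [Zfun, upVec, downVec, basisVec] using congrFun hB (downCfg N)

open SixVertex in
/-- `B(ν_N) ⋯ B(ν_1) |⇑⟩ = (∏_{k=1}^N a(ν_k)) |⇓⟩`, where
`a(λ) = ∏_{k=1}^N (λ - ν_k + 1)`; consequently
`Z_N(ν_1,…,ν_N) = ∏_{k=1}^N a(ν_k)`. -/
theorem Bprod_up_eq_down (N : ℕ) (hN : 1 ≤ N) (ν : Fin N → ℂ) :
    ((((List.finRange N).reverse).map fun k => Bop ν (ν k)).prod).mulVec (upVec N) =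
        (∏ k, ∏ l, (ν k - ν l + 1)) • downVec N ∧
      Zfun N ν ν = ∏ k, ∏ l, (ν k - ν l + 1) :=
  Bprod_up_eq_down_general N ν
end

section
/- For any ν_1,…,ν_N ∈ ℂ, the partition function with rational weights evaluated at λ_j = ν_j for all j equals Z_N(ν_1,…,ν_N) = ∏_{j,k=1}^N (ν_j − ν_k + 1). -/
open scoped BigOperators
-- ==================== auxiliary development ====================
noncomputable section ZAux
namespace ZAux
open SixVertex Finset

variable {N : ℕ}

/-- configuration with first `m` sites down, rest up -/
def cfg (N m : ℕ) : Cfg N := fun i => if (i : ℕ) < m then 1 else 0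

lemma cfg_zero : cfg N 0 = upCfg N := by
  funext i; simp [cfg, upCfg]

lemma cfg_top : cfg N N = downCfg N := by
  funext i; simp [cfg, downCfg, i.isLt]

/-- extension of ν to ℕ -/
def nu' (ν : Fin N → ℂ) (k : ℕ) : ℂ := if h : k < N then ν ⟨k, h⟩ else 0

lemma nu'_lt (ν : Fin N → ℂ) (k : ℕ) (h : k < N) : nu' ν k = ν ⟨k, h⟩ := dif_pos h

/-- multiplication against a delta-supported column -/
lemma mul_col (X Y : Op N) (s s₀ : Cfg N) (c : ℂ)
    (h : ∀ t, Y t s = if t = s₀ then c else 0) (s' : Cfg N) :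
    (X * Y) s' s = X s' s₀ * c := by
  rw [Matrix.mul_apply]
  simp only [h, mul_ite, mul_zero]
  rw [Finset.sum_ite_eq' Finset.univ s₀ (fun t => X s' t * c)]
  simp

lemma mul_col_zero (X Y : Op N) (s : Cfg N)
    (h : ∀ t, Y t s = 0) (s' : Cfg N) :
    (X * Y) s' s = 0 := by
  rw [Matrix.mul_apply]
  simp [h]

lemma siteOp_col_zero (K : Fin N) (M : Matrix (Fin 2) (Fin 2) ℂ) (s₀ : Cfg N)
    (h : ∀ i, M i (s₀ K) = 0) (s' : Cfg N) :
    siteOp K M s' s₀ = 0 := by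
  unfold siteOp
  simp only [Matrix.of_apply]
  split <;> simp [h]

lemma siteOp_col_delta (K : Fin N) (M : Matrix (Fin 2) (Fin 2) ℂ) (s₀ : Cfg N)
    (v : Fin 2) (c : ℂ) (h : ∀ i, M i (s₀ K) = if i = v then c else 0) (s' : Cfg N) :
    siteOp K M s' s₀ = if s' = Function.update s₀ K v then c else 0 := by
  unfold siteOp
  simp only [Matrix.of_apply]
  by_cases h1 : ∀ i, i ≠ K → s' i = s₀ i
  · rw [if_pos h1, h]
    by_cases h2 : s' K = v
    · have hs : s' = Function.update s₀ K v := by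
        funext i
        by_cases hi : i = K
        · subst hi; simp [Function.update_self, h2]
        · simp [Function.update_of_ne hi, h1 i hi]
      simp [h2, hs]
    · have hs : s' ≠ Function.update s₀ K v := by
        intro hc
        apply h2
        rw [hc]; simp [Function.update_self]
      simp [h2, hs]
  · rw [if_neg h1]
    have hs : s' ≠ Function.update s₀ K v := by
      intro hc
      apply h1
      intro i hi
      rw [hc, Function.update_of_ne hi]
    simp [hs]

/-- partial monodromy over the first n sites -/
def P (ν : Fin N → ℂ) (l : ℂ) (n : ℕ) : Matrix (Fin 2) (Fin 2) (Op N) :=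
  (((List.finRange N).take n).reverse.map fun k => Lop ν k l).prod

lemma P_zero (ν : Fin N → ℂ) (l : ℂ) : P ν l 0 = 1 := rfl

lemma P_succ (ν : Fin N → ℂ) (l : ℂ) (n : ℕ) (hn : n < N) :
    P ν l (n + 1) = Lop ν ⟨n, hn⟩ l * P ν l n := by
  unfold P
  rw [List.take_succ]
  have : (List.finRange N)[n]? = some ⟨n, hn⟩ := by
    simp [List.getElem?_eq_getElem, hn]
  rw [this]
  simp

lemma P_top (ν : Fin N → ℂ) (l : ℂ) : P ν l N = monodromy ν l := by
  unfold P monodromy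
  rw [List.take_of_length_le (by simp)]

-- entry helpers (to be appended inside namespace ZAux)
lemma sigmaMinus_col1 : ∀ i : Fin 2, sigmaMinus i 1 = 0 := by
  intro i; fin_cases i <;> simp [sigmaMinus]
lemma sigmaMinus_col0 : ∀ i : Fin 2, sigmaMinus i 0 = if i = 1 then 1 else 0 := by
  intro i; fin_cases i <;> simp [sigmaMinus]
lemma sigmaPlus_col0 : ∀ i : Fin 2, sigmaPlus i 0 = 0 := by
  intro i; fin_cases i <;> simp [sigmaPlus]
lemma piPlus_col1 : ∀ i : Fin 2, piPlus i 1 = 0 := by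
  intro i; fin_cases i <;> simp [piPlus]
lemma piPlus_col0 : ∀ i : Fin 2, piPlus i 0 = if i = 0 then 1 else 0 := by
  intro i; fin_cases i <;> simp [piPlus]
lemma piMinus_col0 : ∀ i : Fin 2, piMinus i 0 = 0 := by
  intro i; fin_cases i <;> simp [piMinus]
lemma piMinus_col1 : ∀ i : Fin 2, piMinus i 1 = if i = 1 then 1 else 0 := by
  intro i; fin_cases i <;> simp [piMinus]

lemma diag_col_up (K : Fin N) (a b : ℂ) (s₀ : Cfg N) (h : s₀ K = 0) (s' : Cfg N) :
    (a • siteOp K piPlus + b • siteOp K piMinus) s' s₀ = if s' = s₀ then a else 0 := by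
  have h1 := siteOp_col_delta K piPlus s₀ 0 1 (by rw [h]; exact piPlus_col0) s'
  have h2 := siteOp_col_zero K piMinus s₀ (by rw [h]; exact piMinus_col0) s'
  rw [Matrix.add_apply, Matrix.smul_apply, Matrix.smul_apply, h1, h2]
  have h3 : Function.update s₀ K (0 : Fin 2) = s₀ := by
    rw [← h]; exact Function.update_eq_self K s₀
  rw [h3]
  by_cases hs : s' = s₀ <;> simp [hs]

lemma diag_col_down (K : Fin N) (a b : ℂ) (s₀ : Cfg N) (h : s₀ K = 1) (s' : Cfg N) :
    (a • siteOp K piPlus + b • siteOp K piMinus) s' s₀ = if s' = s₀ then b else 0 := by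
  have h1 := siteOp_col_zero K piPlus s₀ (by rw [h]; exact piPlus_col1) s'
  have h2 := siteOp_col_delta K piMinus s₀ 1 1 (by rw [h]; exact piMinus_col1) s'
  rw [Matrix.add_apply, Matrix.smul_apply, Matrix.smul_apply, h1, h2]
  have h3 : Function.update s₀ K (1 : Fin 2) = s₀ := by
    rw [← h]; exact Function.update_eq_self K s₀
  rw [h3]
  by_cases hs : s' = s₀ <;> simp [hs]

lemma Lop00 (ν : Fin N → ℂ) (K : Fin N) (l : ℂ) :
    Lop ν K l 0 0 = aW l (ν K) • siteOp K piPlus + bW l (ν K) • siteOp K piMinus := rfl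
lemma Lop01 (ν : Fin N → ℂ) (K : Fin N) (l : ℂ) :
    Lop ν K l 0 1 = siteOp K sigmaMinus := rfl
lemma Lop10 (ν : Fin N → ℂ) (K : Fin N) (l : ℂ) :
    Lop ν K l 1 0 = siteOp K sigmaPlus := rfl
lemma Lop11 (ν : Fin N → ℂ) (K : Fin N) (l : ℂ) :
    Lop ν K l 1 1 = bW l (ν K) • siteOp K piPlus + aW l (ν K) • siteOp K piMinus := rfl

lemma cfg_apply (N m : ℕ) (i : Fin N) : cfg N m i = if (i : ℕ) < m then 1 else 0 := rfl

lemma cfg_update (m : ℕ) (hm : m < N) :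
    Function.update (cfg N m) ⟨m, hm⟩ (1 : Fin 2) = cfg N (m + 1) := by
  funext i
  by_cases hi : i = ⟨m, hm⟩
  · subst hi; simp [Function.update_self, cfg_apply]
  · rw [Function.update_of_ne hi, cfg_apply, cfg_apply]
    have hne : (i : ℕ) ≠ m := fun hc => hi (Fin.ext hc)
    by_cases h2 : (i : ℕ) < m
    · rw [if_pos h2, if_pos (Nat.lt_succ_of_lt h2)]
    · rw [if_neg h2, if_neg (by omega)]
lemma key (ν : Fin N → ℂ) (m : ℕ) (hm : m < N) :
    ∀ n, n ≤ N →
      (∀ s', P ν (ν ⟨m, hm⟩) n 0 1 s' (cfg N m) =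
        if m < n ∧ s' = cfg N (m + 1) then
          ∏ k ∈ (Finset.range n).erase m, aW (ν ⟨m, hm⟩) (nu' ν k) else 0)
      ∧ (∀ s', P ν (ν ⟨m, hm⟩) n 1 1 s' (cfg N m) =
        if n ≤ m ∧ s' = cfg N m then
          ∏ k ∈ Finset.range n, aW (ν ⟨m, hm⟩) (nu' ν k) else 0) := by
  intro n
  induction n with
  | zero =>
    intro _
    constructor
    · intro s'
      rw [P_zero]
      have h0 : (1 : Matrix (Fin 2) (Fin 2) (Op N)) 0 1 = 0 :=
        Matrix.one_apply_ne (by decide)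
      rw [h0]
      simp
    · intro s'
      rw [P_zero]
      have h0 : (1 : Matrix (Fin 2) (Fin 2) (Op N)) 1 1 = 1 := Matrix.one_apply_eq 1
      rw [h0, Matrix.one_apply]
      simp
  | succ n ih =>
    intro hn1
    have hn : n < N := hn1
    obtain ⟨IH01, IH11⟩ := ih (le_of_lt hn)
    have hmul : ∀ (α : Fin 2) (s' : Cfg N),
        P ν (ν ⟨m, hm⟩) (n + 1) α 1 s' (cfg N m) =
          (Lop ν ⟨n, hn⟩ (ν ⟨m, hm⟩) α 0 * P ν (ν ⟨m, hm⟩) n 0 1) s' (cfg N m)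
            + (Lop ν ⟨n, hn⟩ (ν ⟨m, hm⟩) α 1 * P ν (ν ⟨m, hm⟩) n 1 1) s' (cfg N m) := by
      intro α s'
      rw [P_succ ν (ν ⟨m, hm⟩) n hn, Matrix.mul_apply, Fin.sum_univ_two, Matrix.add_apply]
    rcases lt_trichotomy n m with hcase | hcase | hcase
    · -- n < m : site n carries a frozen down spin
      have h01z : ∀ t, P ν (ν ⟨m, hm⟩) n 0 1 t (cfg N m) = 0 := by
        intro t; rw [IH01 t, if_neg]; rintro ⟨h, -⟩; omega
      have h11 : ∀ t, P ν (ν ⟨m, hm⟩) n 1 1 t (cfg N m) =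
          if t = cfg N m then ∏ k ∈ Finset.range n, aW (ν ⟨m, hm⟩) (nu' ν k) else 0 := by
        intro t; rw [IH11 t]
        by_cases ht : t = cfg N m <;> simp [ht, le_of_lt hcase]
      have hcfgK : cfg N m ⟨n, hn⟩ = 1 := by rw [cfg_apply]; simp [hcase]
      constructor
      · intro s'
        rw [hmul 0 s', mul_col_zero _ _ _ h01z s',
          mul_col _ _ _ _ _ h11 s', Lop01,
          siteOp_col_zero _ sigmaMinus _ (by rw [hcfgK]; exact sigmaMinus_col1) s']
        rw [if_neg (show ¬(m < n + 1 ∧ s' = cfg N (m + 1)) by rintro ⟨h, -⟩; omega)]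
        ring
      · intro s'
        rw [hmul 1 s', mul_col_zero _ _ _ h01z s',
          mul_col _ _ _ _ _ h11 s', Lop11, diag_col_down _ _ _ _ hcfgK s']
        by_cases hs : s' = cfg N m
        · rw [if_pos hs, if_pos (show n + 1 ≤ m ∧ s' = cfg N m from ⟨by omega, hs⟩),
            Finset.prod_range_succ, nu'_lt ν n hn]
          ring
        · rw [if_neg hs, if_neg (show ¬(n + 1 ≤ m ∧ s' = cfg N m) from fun h => hs h.2)]
          ring
    · -- n = m : the flipping site
      have hKm : (⟨n, hn⟩ : Fin N) = ⟨m, hm⟩ := Fin.ext hcase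
      have h01z : ∀ t, P ν (ν ⟨m, hm⟩) n 0 1 t (cfg N m) = 0 := by
        intro t; rw [IH01 t, if_neg]; rintro ⟨h, -⟩; omega
      have h11 : ∀ t, P ν (ν ⟨m, hm⟩) n 1 1 t (cfg N m) =
          if t = cfg N m then ∏ k ∈ Finset.range n, aW (ν ⟨m, hm⟩) (nu' ν k) else 0 := by
        intro t; rw [IH11 t]
        by_cases ht : t = cfg N m <;> simp [ht, le_of_eq hcase]
      have hcfgK : cfg N m ⟨n, hn⟩ = 0 := by rw [cfg_apply]; simp [hcase]
      constructor
      · intro s'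
        rw [hmul 0 s', mul_col_zero _ _ _ h01z s',
          mul_col _ _ _ _ _ h11 s', Lop01,
          siteOp_col_delta _ sigmaMinus _ 1 1 (by rw [hcfgK]; exact sigmaMinus_col0) s',
          hKm, cfg_update m hm]
        have hrange : (Finset.range (n + 1)).erase m = Finset.range n := by
          rw [hcase, Finset.range_add_one, Finset.erase_insert (by simp)]
        rw [hrange]
        by_cases hs : s' = cfg N (m + 1)
        · rw [if_pos hs,
            if_pos (show m < n + 1 ∧ s' = cfg N (m + 1) from ⟨by omega, hs⟩)]; ring
        · rw [if_neg hs,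
            if_neg (show ¬(m < n + 1 ∧ s' = cfg N (m + 1)) from fun h => hs h.2)]; ring
      · intro s'
        rw [hmul 1 s', mul_col_zero _ _ _ h01z s',
          mul_col _ _ _ _ _ h11 s', Lop11, diag_col_up _ _ _ _ hcfgK s']
        have hb : bW (ν ⟨m, hm⟩) (ν ⟨n, hn⟩) = 0 := by rw [hKm]; simp [bW]
        rw [hb, if_neg (show ¬(n + 1 ≤ m ∧ s' = cfg N m) by rintro ⟨h, -⟩; omega)]
        by_cases hs : s' = cfg N m <;> simp [hs]
    · -- m < n : site n carries a frozen up spin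
      have h11z : ∀ t, P ν (ν ⟨m, hm⟩) n 1 1 t (cfg N m) = 0 := by
        intro t; rw [IH11 t, if_neg]; rintro ⟨h, -⟩; omega
      have h01 : ∀ t, P ν (ν ⟨m, hm⟩) n 0 1 t (cfg N m) =
          if t = cfg N (m + 1) then
            ∏ k ∈ (Finset.range n).erase m, aW (ν ⟨m, hm⟩) (nu' ν k) else 0 := by
        intro t; rw [IH01 t]
        by_cases ht : t = cfg N (m + 1) <;> simp [ht, hcase]
      have hcfgK : cfg N (m + 1) ⟨n, hn⟩ = 0 := by rw [cfg_apply]; simp; omega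
      constructor
      · intro s'
        rw [hmul 0 s', mul_col_zero _ _ _ h11z s',
          mul_col _ _ _ _ _ h01 s', Lop00, diag_col_up _ _ _ _ hcfgK s']
        have hrange : (Finset.range (n + 1)).erase m =
            insert n ((Finset.range n).erase m) := by
          rw [Finset.range_add_one, Finset.erase_insert_of_ne (by omega)]
        rw [hrange, Finset.prod_insert (by simp), nu'_lt ν n hn]
        by_cases hs : s' = cfg N (m + 1)
        · rw [if_pos hs,
            if_pos (show m < n + 1 ∧ s' = cfg N (m + 1) from ⟨by omega, hs⟩)]; ring
        · rw [if_neg hs,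
            if_neg (show ¬(m < n + 1 ∧ s' = cfg N (m + 1)) from fun h => hs h.2)]; ring
      · intro s'
        rw [hmul 1 s', mul_col_zero _ _ _ h11z s',
          mul_col _ _ _ _ _ h01 s', Lop10,
          siteOp_col_zero _ sigmaPlus _ (by rw [hcfgK]; exact sigmaPlus_col0) s',
          if_neg (show ¬(n + 1 ≤ m ∧ s' = cfg N m) by rintro ⟨h, -⟩; omega)]
        ring
lemma Bop_cfg (ν : Fin N → ℂ) (m : ℕ) (hm : m < N) (s' : Cfg N) :
    Bop ν (ν ⟨m, hm⟩) s' (cfg N m) =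
      if s' = cfg N (m + 1) then
        ∏ k ∈ (Finset.range N).erase m, aW (nu' ν m) (nu' ν k) else 0 := by
  have h := (key ν m hm N le_rfl).1 s'
  rw [P_top] at h
  rw [show Bop ν (ν ⟨m, hm⟩) = monodromy ν (ν ⟨m, hm⟩) 0 1 from rfl, h,
    ← nu'_lt ν m hm]
  by_cases hs : s' = cfg N (m + 1)
  · rw [if_pos ⟨hm, hs⟩, if_pos hs]
  · rw [if_neg (fun h => hs h.2), if_neg hs]

/-- the product of the first n B-operators, evaluated at the inhomogeneities -/
def Q (ν : Fin N → ℂ) (n : ℕ) : Op N :=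
  (((List.finRange N).take n).reverse.map fun j => Bop ν (ν j)).prod

lemma Q_zero (ν : Fin N → ℂ) : Q ν 0 = 1 := rfl

lemma Q_succ (ν : Fin N → ℂ) (n : ℕ) (hn : n < N) :
    Q ν (n + 1) = Bop ν (ν ⟨n, hn⟩) * Q ν n := by
  unfold Q
  rw [List.take_succ]
  have h : (List.finRange N)[n]? = some ⟨n, hn⟩ := by
    simp [List.getElem?_eq_getElem, hn]
  rw [h]
  simp

lemma Q_col (ν : Fin N → ℂ) :
    ∀ n, n ≤ N → ∀ s', Q ν n s' (cfg N 0) =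
      if s' = cfg N n then
        ∏ m ∈ Finset.range n, ∏ k ∈ (Finset.range N).erase m,
          aW (nu' ν m) (nu' ν k) else 0 := by
  intro n
  induction n with
  | zero =>
    intro _ s'
    rw [Q_zero, Matrix.one_apply]
    simp
  | succ n ih =>
    intro hn1 s'
    have hn : n < N := hn1
    have hcol := ih (le_of_lt hn)
    rw [Q_succ ν n hn, mul_col _ _ _ _ _ hcol s', Bop_cfg ν n hn s',
      Finset.prod_range_succ]
    by_cases hs : s' = cfg N (n + 1)
    · rw [if_pos hs, if_pos hs]; ring
    · rw [if_neg hs, if_neg hs]; ring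
end ZAux
end ZAux

open SixVertex in
/-- the partition function evaluated at `λ_j = ν_j` for all `j` equals
`∏_{j,k=1}^N (ν_j - ν_k + 1)`. -/
theorem Zfun_at_nu (N : ℕ) (hN : 1 ≤ N) (ν : Fin N → ℂ) :
    Zfun N ν ν = ∏ j, ∏ k, (ν j - ν k + 1) := by
  classical
  have hZQ : Zfun N ν ν = ZAux.Q ν N (downCfg N) (upCfg N) := by
    unfold Zfun ZAux.Q
    rw [List.take_of_length_le (by simp)]
  have h := ZAux.Q_col ν N le_rfl (downCfg N)
  rw [ZAux.cfg_zero] at h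
  rw [hZQ, h, if_pos ZAux.cfg_top.symm]
  have hstep : ∀ m ∈ Finset.range N,
      (∏ k ∈ (Finset.range N).erase m, aW (ZAux.nu' ν m) (ZAux.nu' ν k))
        = ∏ k ∈ Finset.range N, aW (ZAux.nu' ν m) (ZAux.nu' ν k) := by
    intro m _
    exact Finset.prod_erase _ (by simp [aW])
  rw [Finset.prod_congr rfl hstep,
    ← Fin.prod_univ_eq_prod_range
      (fun m => ∏ k ∈ Finset.range N, aW (ZAux.nu' ν m) (ZAux.nu' ν k)) N]
  apply Finset.prod_congr rfl
  intro j _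
  rw [← Fin.prod_univ_eq_prod_range (fun k => aW (ZAux.nu' ν ↑j) (ZAux.nu' ν k)) N]
  apply Finset.prod_congr rfl
  intro k _
  have h1 : ZAux.nu' ν ↑j = ν j := by simp [ZAux.nu']
  have h2 : ZAux.nu' ν ↑k = ν k := by simp [ZAux.nu']
  rw [h1, h2]
  rfl
end

section
/- (Korepin reduction relation.) Let N ≥ 2 and ν_1,…,ν_N ∈ ℂ. For all λ_2,…,λ_N ∈ ℂ: Z_N(ν_1, λ_2,…,λ_N) = (∏_{k=2}^N (ν_1 − ν_k + 1)) · (∏_{j=2}^N (λ_j − ν_1 + 1)) · Z_{N−1}(λ_2,…,λ_N; ν_2,…,ν_N), where Z_{N−1}(·; ν_2,…,ν_N) denotes the partition function of the six-vertex model with domain wall boundary conditions on N−1 sites built in the same way from the parameters ν_2,…,ν_N. -/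
open scoped BigOperators
/-!
Split off the first site: `T_{N+1}(λ) = (1 ⊗ T'(λ)) L_1(λ)`, where `T'` is the monodromy matrix
of sites `2, …, N+1`. Reading off entries, on vectors `|x⟩ ⊗ v` (spin `x` at site 1)
`A(λ)(|↑⟩ ⊗ v) = a(λ,ν_1) |↑⟩ ⊗ A'(λ)v`, `B(λ)(|↓⟩ ⊗ v) = a(λ,ν_1) |↓⟩ ⊗ B'(λ)v` and
`B(λ)(|↑⟩ ⊗ v) = |↓⟩ ⊗ A'(λ)v + b(λ,ν_1) |↑⟩ ⊗ B'(λ)v`. As `b(ν_1,ν_1) = 0` and `|⇑⟩` is an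
eigenvector of `A'`, `B(ν_1)|⇑⟩ = ∏_k a(ν_1,ν_k) |↓⟩ ⊗ |⇑⟩`; each remaining `B(λ_j)` then acts
on the second factor as `B'(λ_j)`, times `a(λ_j,ν_1)`.
-/

open Matrix

lemma List.prod_map_reverse_finRange_succ {M : Type*} [Monoid M] {N : ℕ} (f : Fin (N + 1) → M) :
    (((List.finRange (N + 1)).reverse).map f).prod =
      (((List.finRange N).reverse).map fun k => f k.succ).prod * f 0 := by
  simp only [List.map_reverse, ← List.ofFn_eq_map, List.ofFn_succ, List.reverse_cons,
    List.prod_append, List.prod_singleton]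

lemma Matrix.list_prod_map_mulVec_of_intertwining {ι m n R : Type*} [CommSemiring R]
    [Fintype m] [Fintype n] [DecidableEq m] [DecidableEq n] {X : ι → Matrix m m R}
    {Y : ι → Matrix n n R} {c : ι → R} {J : Matrix m n R}
    (h : ∀ i v, X i *ᵥ (J *ᵥ v) = c i • J *ᵥ (Y i *ᵥ v)) (L : List ι) (v : n → R) :
    (L.map X).prod *ᵥ (J *ᵥ v) = (L.map c).prod • J *ᵥ ((L.map Y).prod *ᵥ v) := by
  induction L generalizing v with
  | nil => simp
  | cons i L ih =>
    simp only [List.map_cons, List.prod_cons, ← mulVec_mulVec, ih, mulVec_smul, h, smul_smul,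
      mul_comm]

namespace SixVertex

variable {N : ℕ}

lemma sum_cfg_succ {M : Type*} [AddCommMonoid M] (f : Cfg (N + 1) → M) :
    ∑ s, f s = ∑ x : Fin 2, ∑ s : Cfg N, f (Fin.cons x s) := by
  rw [← Fintype.sum_prod_type']
  exact Fintype.sum_equiv (Fin.consEquiv fun _ => Fin 2).symm _ _ fun s => by
    simp [Fin.consEquiv]

lemma siteOp_succ_apply_cons (k : Fin N) (P : Matrix (Fin 2) (Fin 2) ℂ) (x y : Fin 2)
    (s t : Cfg N) :
    siteOp k.succ P (Fin.cons x s) (Fin.cons y t) = if x = y then siteOp k P s t else 0 := by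
  by_cases h : x = y <;> simp [siteOp, Fin.forall_fin_succ, (Fin.succ_ne_zero k).symm, h]

lemma siteOp_zero_apply_cons (P : Matrix (Fin 2) (Fin 2) ℂ) (x y : Fin 2) (s t : Cfg N) :
    siteOp 0 P (Fin.cons x s) (Fin.cons y t) = if s = t then P x y else 0 := by
  simp [siteOp, Fin.forall_fin_succ, funext_iff]

lemma smul_siteOp_add_smul_siteOp_s9 (k : Fin N) (c d : ℂ) (P Q : Matrix (Fin 2) (Fin 2) ℂ) :
    c • siteOp k P + d • siteOp k Q = siteOp k (c • P + d • Q) := by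
  ext s t
  simp only [siteOp, Matrix.add_apply, Matrix.smul_apply, of_apply, smul_eq_mul]
  split_ifs <;> simp

-- `tailOp M = 1 ⊗ M`, acting as `M` on sites `2, …, N+1`.
def tailOp : Op N →+* Op (N + 1) where
  toFun M := of fun s t => if s 0 = t 0 then M (Fin.tail s) (Fin.tail t) else 0
  map_one' := by
    ext s t
    induction s using Fin.consCases
    induction t using Fin.consCases
    simp [one_apply, Fin.cons_inj, ite_and]
  map_mul' M M' := by
    ext s t
    induction s using Fin.consCases with | _ x s
    induction t using Fin.consCases with | _ y t
    simp only [of_apply, mul_apply, sum_cfg_succ, Fin.cons_zero, Fin.tail_cons,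
      Fin.sum_univ_two]
    fin_cases x <;> fin_cases y <;> simp
  map_zero' := by ext; simp
  map_add' M M' := by
    ext s t
    simp only [of_apply, Matrix.add_apply]
    split_ifs <;> simp

lemma tailOp_apply_cons (M : Op N) (x y : Fin 2) (s t : Cfg N) :
    tailOp M (Fin.cons x s) (Fin.cons y t) = if x = y then M s t else 0 := by
  simp [tailOp]

lemma tailOp_smul (c : ℂ) (M : Op N) : tailOp (c • M) = c • tailOp M := by
  ext s t
  induction s using Fin.consCases
  induction t using Fin.consCases
  simp [tailOp_apply_cons]

lemma tailOp_siteOp (k : Fin N) (P : Matrix (Fin 2) (Fin 2) ℂ) :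
    tailOp (siteOp k P) = siteOp k.succ P := by
  ext s t
  induction s using Fin.consCases
  induction t using Fin.consCases
  simp [tailOp_apply_cons, siteOp_succ_apply_cons]

lemma Lop_succ (ν : Fin (N + 1) → ℂ) (k : Fin N) (l : ℂ) :
    Lop ν k.succ l = tailOp.mapMatrix (Lop (ν ∘ Fin.succ) k l) := by
  ext i j
  fin_cases i <;> fin_cases j <;> simp [Lop, tailOp_smul, tailOp_siteOp]

lemma monodromy_succ (ν : Fin (N + 1) → ℂ) (l : ℂ) :
    monodromy ν l = tailOp.mapMatrix (monodromy (ν ∘ Fin.succ) l) * Lop ν 0 l := by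
  rw [monodromy, List.prod_map_reverse_finRange_succ, monodromy, map_list_prod, List.map_map]
  simp only [Lop_succ]
  rfl

-- `insertSpin x *ᵥ v = |x⟩ ⊗ v`.
def insertSpin (x : Fin 2) : Matrix (Cfg (N + 1)) (Cfg N) ℂ :=
  of fun s t => if s = Fin.cons x t then 1 else 0

lemma insertSpin_mulVec_apply_cons (x y : Fin 2) (v : Cfg N → ℂ) (s : Cfg N) :
    (insertSpin x *ᵥ v) (Fin.cons y s) = if y = x then v s else 0 := by
  by_cases h : y = x <;> simp [insertSpin, mulVec, dotProduct, Fin.cons_inj, h]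

lemma tailOp_mulVec_apply_cons (M : Op N) (w : Cfg (N + 1) → ℂ) (x : Fin 2) (s : Cfg N) :
    (tailOp M *ᵥ w) (Fin.cons x s) = (M *ᵥ fun t => w (Fin.cons x t)) s := by
  simp [mulVec, dotProduct, sum_cfg_succ, tailOp_apply_cons]

lemma siteOp_zero_mulVec_apply_cons (P : Matrix (Fin 2) (Fin 2) ℂ) (w : Cfg (N + 1) → ℂ)
    (x : Fin 2) (s : Cfg N) :
    (siteOp 0 P *ᵥ w) (Fin.cons x s) = ∑ y, P x y * w (Fin.cons y s) := by
  simp [mulVec, dotProduct, sum_cfg_succ, siteOp_zero_apply_cons]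

lemma upVec_succ : upVec (N + 1) = insertSpin 0 *ᵥ upVec N := by
  ext s
  induction s using Fin.consCases with | _ x s
  rw [insertSpin_mulVec_apply_cons]
  by_cases hx : x = 0 <;>
    simp [upVec, basisVec, Pi.single_apply, upCfg, hx, funext_iff, Fin.forall_fin_succ]

lemma tailOp_mulVec_insertSpin (M : Op N) (x : Fin 2) (v : Cfg N → ℂ) :
    tailOp M *ᵥ (insertSpin x *ᵥ v) = insertSpin x *ᵥ (M *ᵥ v) := by
  ext s
  induction s using Fin.consCases with | _ y s
  by_cases h : y = x <;>
    simp [tailOp_mulVec_apply_cons, insertSpin_mulVec_apply_cons, h, ← Pi.zero_def]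

lemma siteOp_zero_mulVec_insertSpin (P : Matrix (Fin 2) (Fin 2) ℂ) (y : Fin 2)
    (v : Cfg N → ℂ) :
    siteOp 0 P *ᵥ (insertSpin y *ᵥ v) = ∑ x, P x y • insertSpin x *ᵥ v := by
  ext s
  induction s using Fin.consCases with | _ x s
  simp [siteOp_zero_mulVec_apply_cons, insertSpin_mulVec_apply_cons, Finset.sum_apply]

lemma Aop_succ (ν : Fin (N + 1) → ℂ) (l : ℂ) :
    Aop ν l = tailOp (Aop (ν ∘ Fin.succ) l) *
          siteOp 0 (aW l (ν 0) • piPlus + bW l (ν 0) • piMinus)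
      + tailOp (Bop (ν ∘ Fin.succ) l) * siteOp 0 sigmaPlus := by
  rw [Aop, monodromy_succ, mul_apply, Fin.sum_univ_two, ← smul_siteOp_add_smul_siteOp_s9]
  simp [Lop, Aop, Bop]

lemma Bop_succ (ν : Fin (N + 1) → ℂ) (l : ℂ) :
    Bop ν l = tailOp (Aop (ν ∘ Fin.succ) l) * siteOp 0 sigmaMinus
      + tailOp (Bop (ν ∘ Fin.succ) l) *
          siteOp 0 (bW l (ν 0) • piPlus + aW l (ν 0) • piMinus) := by
  rw [Bop, monodromy_succ, mul_apply, Fin.sum_univ_two, ← smul_siteOp_add_smul_siteOp_s9]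
  simp [Lop, Aop, Bop]

lemma Aop_mulVec_insertSpin_zero (ν : Fin (N + 1) → ℂ) (l : ℂ) (v : Cfg N → ℂ) :
    Aop ν l *ᵥ (insertSpin 0 *ᵥ v) =
      aW l (ν 0) • insertSpin 0 *ᵥ (Aop (ν ∘ Fin.succ) l *ᵥ v) := by
  simp [Aop_succ, add_mulVec, ← mulVec_mulVec, siteOp_zero_mulVec_insertSpin,
    Fin.sum_univ_two, piPlus, piMinus, sigmaPlus, mulVec_smul, tailOp_mulVec_insertSpin]

lemma Bop_mulVec_insertSpin_zero (ν : Fin (N + 1) → ℂ) (l : ℂ) (v : Cfg N → ℂ) :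
    Bop ν l *ᵥ (insertSpin 0 *ᵥ v) = insertSpin 1 *ᵥ (Aop (ν ∘ Fin.succ) l *ᵥ v)
      + bW l (ν 0) • insertSpin 0 *ᵥ (Bop (ν ∘ Fin.succ) l *ᵥ v) := by
  simp [Bop_succ, add_mulVec, ← mulVec_mulVec, siteOp_zero_mulVec_insertSpin,
    Fin.sum_univ_two, piPlus, piMinus, sigmaMinus, mulVec_smul, tailOp_mulVec_insertSpin]

lemma Bop_mulVec_insertSpin_one (ν : Fin (N + 1) → ℂ) (l : ℂ) (v : Cfg N → ℂ) :
    Bop ν l *ᵥ (insertSpin 1 *ᵥ v) =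
      aW l (ν 0) • insertSpin 1 *ᵥ (Bop (ν ∘ Fin.succ) l *ᵥ v) := by
  simp [Bop_succ, add_mulVec, ← mulVec_mulVec, siteOp_zero_mulVec_insertSpin,
    Fin.sum_univ_two, piPlus, piMinus, sigmaMinus, mulVec_smul, tailOp_mulVec_insertSpin]

lemma Aop_mulVec_upVec (ν : Fin N → ℂ) (l : ℂ) :
    Aop ν l *ᵥ upVec N = (∏ k, aW l (ν k)) • upVec N := by
  induction N with
  | zero => simp [Aop, monodromy]
  | succ N ih =>
    rw [upVec_succ, Aop_mulVec_insertSpin_zero, ih, mulVec_smul, smul_smul, Fin.prod_univ_succ]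
    rfl

lemma Bop_self_mulVec_upVec (ν : Fin (N + 1) → ℂ) :
    Bop ν (ν 0) *ᵥ upVec (N + 1) =
      (∏ k : Fin N, aW (ν 0) (ν k.succ)) • insertSpin 1 *ᵥ upVec N := by
  rw [upVec_succ, Bop_mulVec_insertSpin_zero, Aop_mulVec_upVec]
  simp [bW, mulVec_smul]

lemma downCfg_succ : downCfg (N + 1) = Fin.cons 1 (downCfg N) := by
  ext i
  induction i using Fin.cases <;> rfl

lemma Zfun_eq_mulVec_upVec (ν lam : Fin N → ℂ) :
    Zfun N ν lam =
      ((((List.finRange N).reverse).map fun j => Bop ν (lam j)).prod *ᵥ upVec N) (downCfg N) := by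
  simp [Zfun, upVec, basisVec]

end SixVertex

open SixVertex in
theorem Zfun_reduction_general (N : ℕ) (ν : Fin (N + 1) → ℂ)
    (lam : Fin (N + 1) → ℂ) (h1 : lam 0 = ν 0) :
    Zfun (N + 1) ν lam =
      (∏ k : Fin N, (ν 0 - ν k.succ + 1)) * (∏ j : Fin N, (lam j.succ - ν 0 + 1)) *
        Zfun N (ν ∘ Fin.succ) (lam ∘ Fin.succ) := by
  have hB : ∀ (j : Fin N) (v : Cfg N → ℂ),
      Bop ν (lam j.succ) *ᵥ (insertSpin 1 *ᵥ v) =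
        aW (lam j.succ) (ν 0) • insertSpin 1 *ᵥ (Bop (ν ∘ Fin.succ) (lam j.succ) *ᵥ v) :=
    fun j v => Bop_mulVec_insertSpin_one ν _ v
  rw [Zfun_eq_mulVec_upVec, List.prod_map_reverse_finRange_succ, ← mulVec_mulVec, h1,
    Bop_self_mulVec_upVec, mulVec_smul, list_prod_map_mulVec_of_intertwining hB, downCfg_succ,
    Pi.smul_apply, Pi.smul_apply, insertSpin_mulVec_apply_cons, if_pos rfl,
    Zfun_eq_mulVec_upVec]
  simp only [aW, List.map_reverse, List.prod_reverse, ← Fin.prod_univ_def, smul_eq_mul,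
    Function.comp_apply]
  ring

open SixVertex in
/-- STATEMENT 9 (Korepin reduction relation), stated for lattice size `N + 1 ≥ 2`:
if `λ_1 = ν_1` then
`Z_{N+1}(ν_1, λ_2, …, λ_{N+1}) = ∏_{k=2}^{N+1} (ν_1 - ν_k + 1) ⬝ ∏_{j=2}^{N+1} (λ_j - ν_1 + 1)
  ⬝ Z_N(λ_2,…,λ_{N+1}; ν_2,…,ν_{N+1})`. -/
theorem Zfun_reduction (N : ℕ) (hN : 1 ≤ N) (ν : Fin (N + 1) → ℂ)
    (lam : Fin (N + 1) → ℂ) (h1 : lam 0 = ν 0) :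
    Zfun (N + 1) ν lam =
      (∏ k : Fin N, (ν 0 - ν k.succ + 1)) * (∏ j : Fin N, (lam j.succ - ν 0 + 1)) *
        Zfun N (ν ∘ Fin.succ) (lam ∘ Fin.succ) :=
  Zfun_reduction_general N ν lam h1
end

section
/- (Uniqueness of the partition function, trigonometric case.) Let q ∈ ℂ with q ≠ 0 and q² ≠ 1, and let y_1,…,y_N ∈ ℂ be nonzero, pairwise distinct, and satisfy q² y_j ≠ y_k for all j ≠ k. If P and P′ are two polynomials in ℂ[x_1,…,x_N] both satisfying the trigonometric DWBC conditions, then P = P′. -/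
open scoped BigOperators

namespace SixVertexTrig

/-- A polynomial `P ∈ ℂ[x_1,…,x_N]` satisfies the trigonometric DWBC conditions if it is
symmetric, of degree at most `N-1` in each variable, vanishes whenever two of its
arguments equal `y_j` and `q⁻² y_j` (for some `j`), and takes the value
`(q - q⁻¹)^N ∏_{j≠k} (q y_j - q⁻¹ y_k)` at `x = y`.  (Since `P` is required to be
symmetric, the vanishing condition is phrased via an arbitrary pair of distinct
argument slots carrying the two values.) -/
def TrigCond (N : ℕ) (q : ℂ) (y : Fin N → ℂ) (P : MvPolynomial (Fin N) ℂ) : Prop :=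
  P.IsSymmetric ∧
  (∀ j : Fin N, P.degreeOf j ≤ N - 1) ∧
  (∀ (j : Fin N) (x : Fin N → ℂ) (i₁ i₂ : Fin N), i₁ ≠ i₂ →
    x i₁ = y j → x i₂ = (q ^ 2)⁻¹ * y j → MvPolynomial.eval x P = 0) ∧
  MvPolynomial.eval y P =
    (q - q⁻¹) ^ N * ∏ j, ∏ k ∈ Finset.univ.erase j, (q * y j - q⁻¹ * y k)

/-- The polynomial `p_i(x) = ∑_{j=1}^N p_{ij} x^{j-1}` of degree at most `N-1`,
determined by the row `i` of a coefficient matrix `p`. -/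
noncomputable def pval {N : ℕ} (p : Matrix (Fin N) (Fin N) ℂ) (i : Fin N) (x : ℂ) : ℂ :=
  ∑ j, p i j * x ^ (j : ℕ)

/-- `ã(x) = ∏_{k=1}^N (q x - q⁻¹ y_k)`. -/
noncomputable def aTil (N : ℕ) (q : ℂ) (y : Fin N → ℂ) (x : ℂ) : ℂ :=
  ∏ k, (q * x - q⁻¹ * y k)

/-- `d̃(x) = ∏_{k=1}^N (x - y_k)`. -/
noncomputable def dTil (N : ℕ) (y : Fin N → ℂ) (x : ℂ) : ℂ :=
  ∏ k, (x - y k)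

end SixVertexTrig

open MvPolynomial

namespace TrigUniqueAux

variable {n : ℕ}

/-- Push a ring hom to `ℂ` through `aeval`. -/
lemma hom_aeval {A : Type*} [CommSemiring A] [Algebra ℂ A] (φ : A →+* ℂ)
    (hφ : ∀ a : ℂ, φ (algebraMap ℂ A a) = a) (g : Fin n → A) (p : MvPolynomial (Fin n) ℂ) :
    φ (aeval g p) = eval (fun j => φ (g j)) p := by
  induction p using MvPolynomial.induction_on with
  | C a => simp [hφ]
  | add p q hp hq => simp [map_add, hp, hq]
  | mul_X p j hp => simp [map_mul, hp]

/-- The slice of a multivariate polynomial in one variable, as a one-variable polynomial. -/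
noncomputable def slice (x : Fin n → ℂ) (i : Fin n) (p : MvPolynomial (Fin n) ℂ) :
    Polynomial ℂ :=
  aeval (Function.update (fun j => (Polynomial.C (x j) : Polynomial ℂ)) i Polynomial.X) p

lemma eval_slice (x : Fin n → ℂ) (i : Fin n) (p : MvPolynomial (Fin n) ℂ) (t : ℂ) :
    (slice x i p).eval t = eval (Function.update x i t) p := by
  rw [slice, show (Polynomial.eval t : Polynomial ℂ → ℂ) = Polynomial.evalRingHom t from rfl,
    hom_aeval (Polynomial.evalRingHom t) (by simp) _ p]
  have : (fun j => (Polynomial.evalRingHom t) (Function.update (fun j => Polynomial.C (x j)) i Polynomial.X j)) = Function.update x i t := by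
    funext j
    rcases eq_or_ne j i with rfl | hji
    · simp
    · simp [Function.update_apply, hji]
  rw [this]

/-- Density: if `p` vanishes at all points agreeing with `x` off `K` and avoiding the
value `c` on `K`, then `p` vanishes at `x`. -/
lemma dense_vanish (p : MvPolynomial (Fin n) ℂ) (c : ℂ) (K : Finset (Fin n)) :
    ∀ x : Fin n → ℂ,
      (∀ z : Fin n → ℂ, (∀ i, i ∉ K → z i = x i) → (∀ i ∈ K, z i ≠ c) → eval z p = 0) →
      eval x p = 0 := by
  classical
  induction K using Finset.induction with
  | empty =>
    intro x h
    exact h x (fun _ _ => rfl) (by simp)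
  | @insert i K' hiK' IH =>
    intro x h
    have hroots : ∀ t : ℂ, t ≠ c → eval (Function.update x i t) p = 0 := by
      intro t ht
      apply IH (Function.update x i t)
      intro z hz hz'
      apply h z
      · intro i' hi'
        have h1 : i' ∉ K' := fun hc => hi' (Finset.mem_insert_of_mem hc)
        have h2 : i' ≠ i := fun hc => hi' (hc ▸ Finset.mem_insert_self i K')
        rw [hz i' h1, Function.update_apply, if_neg h2]
      · intro i' hi'
        rcases Finset.mem_insert.mp hi' with rfl | hmem
        · rw [hz i' hiK', Function.update_self]; exact ht
        · exact hz' i' hmem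
    have hs : slice x i p = 0 := by
      apply Polynomial.eq_zero_of_infinite_isRoot
      apply Set.Infinite.mono (s := {t : ℂ | t ≠ c})
      · intro t ht
        simp only [Set.mem_setOf_eq, Polynomial.IsRoot.def]
        rw [eval_slice]
        exact hroots t ht
      · exact (Set.finite_singleton c).infinite_compl
    have := eval_slice x i p (x i)
    rw [hs, Function.update_eq_self] at this
    simpa using this.symm

lemma X_sub_C_ne_zero (k : Fin n) (c : ℂ) : (X k - C c : MvPolynomial (Fin n) ℂ) ≠ 0 := by
  intro h
  have := congrArg (coeff (Finsupp.single k 1)) h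
  simp [coeff_X, coeff_C, Finsupp.single_eq_zero, eq_comm] at this

lemma one_le_degreeOf_X_sub_C (i : Fin n) (c : ℂ) :
    1 ≤ degreeOf i (X i - C c : MvPolynomial (Fin n) ℂ) := by
  rw [degreeOf_eq_sup]
  have hmem : Finsupp.single i 1 ∈ (X i - C c : MvPolynomial (Fin n) ℂ).support := by
    rw [mem_support_iff]
    simp [coeff_X, coeff_C, Finsupp.single_eq_zero, eq_comm]
  have := Finset.le_sup (f := fun m : Fin n →₀ ℕ => m i) hmem
  simpa using this

/-- `degreeOf` is additive on products of nonzero polynomials over `ℂ`. -/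
lemma degreeOf_mul_eq' {n' : ℕ} (i : Fin n') (a b : MvPolynomial (Fin n') ℂ)
    (ha : a ≠ 0) (hb : b ≠ 0) :
    degreeOf i (a * b) = degreeOf i a + degreeOf i b := by
  classical
  have hpos := i.pos
  obtain ⟨n, rfl⟩ : ∃ m, n' = m + 1 := ⟨n' - 1, by omega⟩
  set e : Equiv.Perm (Fin (n+1)) := Equiv.swap 0 i with he
  have hren : ∀ p : MvPolynomial (Fin (n+1)) ℂ,
      degreeOf i p = (finSuccEquiv ℂ n (rename e p)).natDegree := by
    intro p
    rw [natDegree_finSuccEquiv]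
    have h1 := degreeOf_rename_of_injective (p := p) (f := e) e.injective i
    have h2 : e i = 0 := Equiv.swap_apply_right 0 i
    rw [← h1, h2]
  have hai : rename (e : Fin (n+1) → Fin (n+1)) a ≠ 0 := fun hc => ha ((rename_injective _ e.injective) (by simpa using hc))
  have hbi : rename (e : Fin (n+1) → Fin (n+1)) b ≠ 0 := fun hc => hb ((rename_injective _ e.injective) (by simpa using hc))
  have hA : finSuccEquiv ℂ n (rename e a) ≠ 0 := fun hc => hai (by
    have := (finSuccEquiv ℂ n).injective (hc.trans (map_zero _).symm); exact this)
  have hB : finSuccEquiv ℂ n (rename e b) ≠ 0 := fun hc => hbi (by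
    have := (finSuccEquiv ℂ n).injective (hc.trans (map_zero _).symm); exact this)
  rw [hren, hren, hren, map_mul, map_mul, Polynomial.natDegree_mul hA hB]

lemma degreeOf_sum_le {α : Type*} (i : Fin n) (s : Finset α) (f : α → MvPolynomial (Fin n) ℂ)
    (b : ℕ) (h : ∀ a ∈ s, degreeOf i (f a) ≤ b) :
    degreeOf i (∑ a ∈ s, f a) ≤ b := by
  classical
  induction s using Finset.induction with
  | empty => simp
  | @insert a s ha IH =>
    rw [Finset.sum_insert ha]
    refine le_trans (degreeOf_add_le _ _ _) ?_
    exact max_le (h a (Finset.mem_insert_self a s)) (IH fun a' ha' => h a' (Finset.mem_insert_of_mem ha'))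

/-- Divisibility by a product of linear factors from vanishing conditions. -/
lemma prod_X_sub_C_dvd (c : ℂ) (S : Finset (Fin n)) :
    ∀ p : MvPolynomial (Fin n) ℂ,
      (∀ x : Fin n → ℂ, (∃ i ∈ S, x i = c) → eval x p = 0) →
      (∏ i ∈ S, (X i - C c)) ∣ p := by
  classical
  induction S using Finset.induction with
  | empty => intro p _; simp
  | @insert i S' hiS' IH =>
    intro p h
    -- first: (X i - C c) ∣ p
    have hsub : (X i - C c) ∣ (p - aeval (Function.update X i (C c)) p) := by
      clear h
      induction p using MvPolynomial.induction_on with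
      | C a => simp
      | add p q hp hq =>
        have : p + q - aeval (Function.update X i (C c)) (p + q)
            = (p - aeval (Function.update X i (C c)) p)
              + (q - aeval (Function.update X i (C c)) q) := by
          rw [map_add]; ring
        rw [this]; exact dvd_add hp hq
      | mul_X p j hp =>
        have : p * X j - aeval (Function.update X i (C c)) (p * X j)
            = (p - aeval (Function.update X i (C c)) p) * X j
              + aeval (Function.update X i (C c)) p
                * (X j - Function.update X i (C c) j) := by
          rw [map_mul, aeval_X]; ring
        rw [this]
        refine dvd_add (Dvd.dvd.mul_right hp _) (Dvd.dvd.mul_left ?_ _)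
        rcases eq_or_ne j i with rfl | hji
        · simp
        · simp [Function.update_apply, hji]
    have hzero : aeval (Function.update X i (C c)) p = 0 := by
      apply MvPolynomial.funext (q := 0)
      intro x
      rw [map_zero, show (eval x : MvPolynomial (Fin n) ℂ →+* ℂ) (aeval (Function.update X i (C c)) p)
        = eval (fun j => eval x (Function.update X i (C c) j)) p from hom_aeval _ (by simp) _ p]
      have : (fun j => eval x (Function.update X i (C c) j)) = Function.update x i c := by
        funext j
        rcases eq_or_ne j i with rfl | hji
        · simp
        · simp [Function.update_apply, hji]
      rw [this]
      exact h _ ⟨i, Finset.mem_insert_self i S', Function.update_self _ _ _⟩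
    rw [hzero, sub_zero] at hsub
    obtain ⟨p₁, hp₁⟩ := hsub
    have h₁ : ∀ x : Fin n → ℂ, (∃ i' ∈ S', x i' = c) → eval x p₁ = 0 := by
      rintro x ⟨i', hi'S, hxi'⟩
      apply dense_vanish p₁ c {i} x
      intro z hz hz'
      have hzi : z i ≠ c := hz' i (Finset.mem_singleton_self i)
      have hne : i' ≠ i := by rintro rfl; exact hiS' hi'S
      have hzi' : z i' = c := by
        rw [hz i' (by simp [hne])]; exact hxi'
      have hpz : eval z p = 0 := h z ⟨i', Finset.mem_insert_of_mem hi'S, hzi'⟩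
      rw [hp₁, map_mul] at hpz
      have : eval z (X i - C c) ≠ 0 := by simpa using sub_ne_zero.mpr hzi
      exact (mul_eq_zero.mp hpz).resolve_left this
    obtain ⟨p₂, hp₂⟩ := IH p₁ h₁
    refine ⟨p₂, ?_⟩
    rw [Finset.prod_insert hiS', hp₁, hp₂]
    ring

lemma eval_polyeval_C {N : ℕ} (b : ℂ) (x' : Fin N → ℂ) (p : MvPolynomial (Fin (N+1)) ℂ) :
    eval x' (Polynomial.eval (MvPolynomial.C b) (finSuccEquiv ℂ N p)) = eval (Fin.cons b x') p := by
  rw [eval_eq_eval_mv_eval']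
  generalize (finSuccEquiv ℂ N p) = Q
  induction Q using Polynomial.induction_on' with
  | add f g hf hg => simp [hf, hg]
  | monomial k a => simp [Polynomial.eval_monomial]

lemma degreeOf_polyeval_C {N : ℕ} (i : Fin N) (b : ℂ) (p : MvPolynomial (Fin (N+1)) ℂ) :
    degreeOf i (Polynomial.eval (MvPolynomial.C b) (finSuccEquiv ℂ N p)) ≤ degreeOf i.succ p := by
  rw [Polynomial.eval_eq_sum_range]
  apply degreeOf_sum_le
  intro k hk
  calc degreeOf i ((finSuccEquiv ℂ N p).coeff k * C b ^ k)
      = degreeOf i (C (b ^ k) * (finSuccEquiv ℂ N p).coeff k) := by rw [mul_comm, map_pow]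
    _ ≤ degreeOf i ((finSuccEquiv ℂ N p).coeff k) := degreeOf_C_mul_le _ _ _
    _ ≤ degreeOf i.succ p := degreeOf_coeff_finSuccEquiv p i k

lemma key : ∀ (N : ℕ) (q : ℂ), q ≠ 0 → ∀ (y : Fin N → ℂ), Function.Injective y →
    (∀ j k, j ≠ k → q ^ 2 * y j ≠ y k) →
    ∀ D : MvPolynomial (Fin N) ℂ,
    (∀ i, D.degreeOf i ≤ N - 1) →
    (∀ (j : Fin N) (x : Fin N → ℂ) (i₁ i₂ : Fin N), i₁ ≠ i₂ →
      x i₁ = y j → x i₂ = (q ^ 2)⁻¹ * y j → eval x D = 0) →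
    (∀ σ : Equiv.Perm (Fin N), eval (y ∘ σ) D = 0) → D = 0 := by
  intro N
  induction N with
  | zero =>
    intro q hq y hy hyq D hdeg hvan hdiag
    apply MvPolynomial.funext (q := 0)
    intro x
    rw [map_zero]
    have hx : x = y ∘ (1 : Equiv.Perm (Fin 0)) := Subsingleton.elim _ _
    rw [hx]
    exact hdiag 1
  | succ N IH =>
    intro q hq y hy hyq D hdeg hvan hdiag
    classical
    have hq2 : (q ^ 2 : ℂ) ≠ 0 := pow_ne_zero _ hq
    set a : Fin (N+1) → ℂ := fun j => (q ^ 2)⁻¹ * y j with ha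
    have hainj : Function.Injective a := by
      intro m m' h
      exact hy (mul_left_cancel₀ (inv_ne_zero hq2) h)
    -- Step 1: substituting a j for the 0-th variable kills D
    have hE : ∀ j : Fin (N+1), Polynomial.eval (MvPolynomial.C (a j)) (finSuccEquiv ℂ N D) = 0 := by
      intro j
      set c : ℂ := y j with hc
      set y' : Fin N → ℂ := y ∘ j.succAbove with hy'def
      have hy' : Function.Injective y' := hy.comp Fin.succAbove_right_injective
      have hyq' : ∀ k l, k ≠ l → q ^ 2 * y' k ≠ y' l := by
        intro k l hkl
        exact hyq _ _ (fun hcon => hkl (Fin.succAbove_right_injective hcon))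
      have hy'c : ∀ k, y' k ≠ c := fun k hcon => Fin.succAbove_ne j k (hy hcon)
      have hy'c2 : ∀ k, (q ^ 2)⁻¹ * y' k ≠ c := by
        intro k hcon
        apply hyq j (j.succAbove k) (Fin.ne_succAbove j k)
        show q ^ 2 * y j = y' k
        rw [← hc, ← hcon]
        field_simp
      set E : MvPolynomial (Fin N) ℂ := Polynomial.eval (MvPolynomial.C (a j)) (finSuccEquiv ℂ N D) with hEdef
      have hevalE : ∀ x' : Fin N → ℂ, eval x' E = eval (Fin.cons (a j) x') D :=
        fun x' => eval_polyeval_C (a j) x' D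
      have hvanE : ∀ x' : Fin N → ℂ, (∃ i ∈ (Finset.univ : Finset (Fin N)), x' i = c) →
          eval x' E = 0 := by
        rintro x' ⟨i, -, hi⟩
        rw [hevalE]
        apply hvan j _ i.succ 0 (Fin.succ_ne_zero i)
        · rw [Fin.cons_succ]; exact hi
        · rw [Fin.cons_zero]
      obtain ⟨F, hF⟩ := prod_X_sub_C_dvd c Finset.univ E hvanE
      have evalE_eq : ∀ x' : Fin N → ℂ,
          eval x' E = (∏ i, (x' i - c)) * eval x' F := by
        intro x'
        rw [hF, map_mul]
        congr 1
        simp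
      have hdegF : ∀ i, degreeOf i F ≤ N - 1 := by
        intro i
        rcases eq_or_ne F 0 with rfl | hF0
        · simp
        have hprodne : (∏ i : Fin N, (X i - C c)) ≠ 0 :=
          Finset.prod_ne_zero_iff.mpr (fun i _ => X_sub_C_ne_zero i c)
        have h1 : degreeOf i E = degreeOf i (∏ i : Fin N, (X i - C c)) + degreeOf i F := by
          rw [hF]; exact degreeOf_mul_eq' i _ _ hprodne hF0
        have h2 : 1 ≤ degreeOf i (∏ i : Fin N, (X i - C c)) := by
          rw [← Finset.mul_prod_erase Finset.univ _ (Finset.mem_univ i)]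
          have hrest : (∏ k ∈ Finset.univ.erase i, (X k - C c : MvPolynomial (Fin N) ℂ)) ≠ 0 :=
            Finset.prod_ne_zero_iff.mpr (fun k _ => X_sub_C_ne_zero k c)
          rw [degreeOf_mul_eq' i _ _ (X_sub_C_ne_zero i c) hrest]
          have := one_le_degreeOf_X_sub_C i c
          omega
        have h3 : degreeOf i E ≤ N := by
          refine le_trans (degreeOf_polyeval_C i (a j) D) ?_
          simpa using hdeg i.succ
        omega
      have hvanF : ∀ (k : Fin N) (x' : Fin N → ℂ) (i₁ i₂ : Fin N), i₁ ≠ i₂ →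
          x' i₁ = y' k → x' i₂ = (q ^ 2)⁻¹ * y' k → eval x' F = 0 := by
        intro k x' i₁ i₂ h12 hx1 hx2
        apply dense_vanish F c (Finset.univ \ {i₁, i₂}) x'
        intro z hz hz'
        have hz1 : z i₁ = y' k := by rw [hz i₁ (by simp)]; exact hx1
        have hz2 : z i₂ = (q ^ 2)⁻¹ * y' k := by rw [hz i₂ (by simp)]; exact hx2
        have hEz : eval z E = 0 := by
          rw [hevalE]
          apply hvan (j.succAbove k) _ i₁.succ i₂.succ
            (fun hcon => h12 (Fin.succ_injective _ hcon))
          · rw [Fin.cons_succ]; exact hz1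
          · rw [Fin.cons_succ]; exact hz2
        have hprodz : (∏ i, (z i - c)) ≠ 0 := by
          rw [Finset.prod_ne_zero_iff]
          intro i _
          refine sub_ne_zero.mpr ?_
          rcases eq_or_ne i i₁ with rfl | hne1
          · rw [hz1]; exact hy'c k
          rcases eq_or_ne i i₂ with rfl | hne2
          · rw [hz2]; exact hy'c2 k
          · exact hz' i (by simp [hne1, hne2])
        rw [evalE_eq] at hEz
        exact (mul_eq_zero.mp hEz).resolve_left hprodz
      have hdiagF : ∀ σ : Equiv.Perm (Fin N), eval (y' ∘ σ) F = 0 := by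
        intro σ
        have hEy : eval (y' ∘ σ) E = 0 := by
          set G : Polynomial ℂ := Polynomial.map (eval (y' ∘ σ)) (finSuccEquiv ℂ N D) with hGdef
          have hGeval : ∀ t : ℂ, G.eval t = eval (Fin.cons t (y' ∘ σ)) D :=
            fun t => (eval_eq_eval_mv_eval' _ _ _).symm
          have hGdeg : G.natDegree ≤ N := by
            refine le_trans Polynomial.natDegree_map_le ?_
            rw [natDegree_finSuccEquiv]
            simpa using hdeg 0
          set r : Fin (N+1) → ℂ := Fin.cons (y j) (fun k => (q ^ 2)⁻¹ * y' k) with hrdef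
          have hrinj : Function.Injective r := by
            apply Fin.cons_injective_of_injective
            · rintro ⟨k, hk⟩
              exact hy'c2 k hk
            · intro k l h
              exact hy' (mul_left_cancel₀ (inv_ne_zero hq2) h)
          have hG0 : G = 0 := by
            apply Polynomial.eq_zero_of_natDegree_lt_card_of_eval_eq_zero G hrinj
            · intro m
              rw [hGeval]
              refine Fin.cases ?_ ?_ m
              · -- r 0 = y j; the point is a permutation of y
                have huinj : Function.Injective
                    (Fin.cons j (fun k => j.succAbove (σ k)) : Fin (N+1) → Fin (N+1)) := by
                  apply Fin.cons_injective_of_injective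
                  · rintro ⟨k, hk⟩
                    exact Fin.succAbove_ne j (σ k) hk
                  · exact Fin.succAbove_right_injective.comp σ.injective
                set τ : Equiv.Perm (Fin (N+1)) :=
                  Equiv.ofBijective _ (Finite.injective_iff_bijective.mp huinj) with hτdef
                have hyτ : Fin.cons (r 0) (y' ∘ σ) = y ∘ τ := by
                  funext m'
                  refine Fin.cases ?_ ?_ m'
                  · simp [hτdef, Equiv.ofBijective, hrdef]
                  · intro k'
                    simp [hτdef, Equiv.ofBijective, hy'def]
                rw [hyτ]
                exact hdiag τ
              · intro k
                apply hvan (j.succAbove k) _ (σ.symm k).succ 0 (Fin.succ_ne_zero _)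
                · rw [Fin.cons_succ]
                  show y' (σ (σ.symm k)) = _
                  rw [Equiv.apply_symm_apply]
                  rfl
                · rw [Fin.cons_zero]
                  show r k.succ = _
                  rw [hrdef, Fin.cons_succ]
                  rfl
            · rw [Fintype.card_fin]
              omega
          have : eval (y' ∘ σ) E = G.eval (a j) := by
            rw [hGeval, hevalE]
          rw [this, hG0, Polynomial.eval_zero]
        rw [evalE_eq] at hEy
        have hprodne : (∏ i, ((y' ∘ σ) i - c)) ≠ 0 :=
          Finset.prod_ne_zero_iff.mpr (fun i _ => sub_ne_zero.mpr (hy'c (σ i)))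
        exact (mul_eq_zero.mp hEy).resolve_left hprodne
      have hF0 : F = 0 := IH q hq y' hy' hyq' F hdegF hvanF hdiagF
      rw [hEdef] at hF ⊢
      rw [hF, hF0, mul_zero]
    -- Step 2: interpolation in the 0-th variable
    apply MvPolynomial.funext (q := 0)
    intro x
    rw [map_zero]
    set H : Polynomial ℂ := Polynomial.map (eval (Fin.tail x)) (finSuccEquiv ℂ N D) with hHdef
    have hHeval : ∀ t : ℂ, H.eval t = eval (Fin.cons t (Fin.tail x)) D :=
      fun t => (eval_eq_eval_mv_eval' _ _ _).symm
    have hHdeg : H.natDegree ≤ N := by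
      refine le_trans Polynomial.natDegree_map_le ?_
      rw [natDegree_finSuccEquiv]
      simpa using hdeg 0
    have hH0 : H = 0 := by
      apply Polynomial.eq_zero_of_natDegree_lt_card_of_eval_eq_zero H hainj
      · intro m
        rw [hHeval, ← eval_polyeval_C (a m) (Fin.tail x) D, hE m, map_zero]
      · rw [Fintype.card_fin]
        omega
    have := hHeval (x 0)
    rw [hH0, Polynomial.eval_zero, Fin.cons_self_tail] at this
    exact this.symm

end TrigUniqueAux


open SixVertexTrig in
/-- uniqueness, trigonometric case: for `q ≠ 0`, `q² ≠ 1` and `y`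
nonzero, pairwise distinct, with `q² y_j ≠ y_k` for `j ≠ k`, two polynomials satisfying
the trigonometric DWBC conditions coincide. -/
theorem trig_unique (N : ℕ) (hN : 1 ≤ N) (q : ℂ) (hq : q ≠ 0) (hq2 : q ^ 2 ≠ 1)
    (y : Fin N → ℂ) (hy0 : ∀ j, y j ≠ 0) (hy : Function.Injective y)
    (hyq : ∀ j k : Fin N, j ≠ k → q ^ 2 * y j ≠ y k)
    (P P' : MvPolynomial (Fin N) ℂ)
    (hP : TrigCond N q y P) (hP' : TrigCond N q y P') :
    P = P' := by
  obtain ⟨hs, hd, hv, hval⟩ := hP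
  obtain ⟨hs', hd', hv', hval'⟩ := hP'
  have hdeg : ∀ i, (P - P').degreeOf i ≤ N - 1 := fun i =>
    le_trans (MvPolynomial.degreeOf_sub_le i P P') (max_le (hd i) (hd' i))
  have hvan : ∀ (j : Fin N) (x : Fin N → ℂ) (i₁ i₂ : Fin N), i₁ ≠ i₂ →
      x i₁ = y j → x i₂ = (q ^ 2)⁻¹ * y j → MvPolynomial.eval x (P - P') = 0 := by
    intro j x i₁ i₂ h12 h1 h2
    rw [map_sub, hv j x i₁ i₂ h12 h1 h2, hv' j x i₁ i₂ h12 h1 h2, sub_zero]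
  have hdiag : ∀ σ : Equiv.Perm (Fin N), MvPolynomial.eval (y ∘ σ) (P - P') = 0 := by
    intro σ
    have e1 : MvPolynomial.eval (y ∘ σ) P = MvPolynomial.eval y P := by
      conv_rhs => rw [← hs σ]
      rw [MvPolynomial.eval_rename]
    have e2 : MvPolynomial.eval (y ∘ σ) P' = MvPolynomial.eval y P' := by
      conv_rhs => rw [← hs' σ]
      rw [MvPolynomial.eval_rename]
    rw [map_sub, e1, e2, hval, hval', sub_self]
  have := TrigUniqueAux.key N q hq y hy hyq (P - P') hdeg hvan hdiag
  exact sub_eq_zero.mp this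
end
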